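/- arXiv:2111.03475 — 8 statements merged into one kernel-verified Lean document; each statement's English description precedes it below -/
import Mathlib

section
/- Localisation theorem: Let R be a commutative ring, M an R-module, b a biderivation on R with values in M, and Σ a multiplicative submonoid of R with 0 ∉ Σ. Then there is a unique biderivation b' on the localization Σ⁻¹R with values in the localized module Σ⁻¹M extending b, i.e., satisfying b'(r/1, r'/1) = b(r,r')/1 for all r, r' ∈ R. Moreover this extension is lifting: for every pair of ideals I, J of R with b(I×R) ⊆ I·M and b(R×J) ⊆ J·M, the extended ideals satisfy b'((I·Σ⁻¹R) × Σ⁻¹R) ⊆ (I·Σ⁻¹R)·(Σ⁻¹M) and b'(Σ⁻¹R × (J·Σ⁻¹R)) ⊆ (J·Σ⁻¹R)·(Σ⁻¹M). -/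
/-- An `M`-valued derivation on a commutative ring `T`. -/
def IsDerivationFun {T M : Type*} [CommRing T] [AddCommGroup M] [Module T M]
    (d : T → M) : Prop :=
  (∀ x y : T, d (x + y) = d x + d y) ∧ (∀ x y : T, d (x * y) = x • d y + y • d x)

/-- An `M`-valued biderivation on a commutative ring `R`: a map `R → R → M` that is a
derivation in each argument. -/
def IsBiderivationFun {R M : Type*} [CommRing R] [AddCommGroup M] [Module R M]
    (b : R → R → M) : Prop :=
  (∀ r : R, IsDerivationFun (b r)) ∧ (∀ s : R, IsDerivationFun (fun r => b r s))

/-!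
A derivation `d : R → N` into a module over `S = W⁻¹R` is the same thing as the ring
homomorphism `r ↦ (r, d r)` into the trivial square-zero extension `S ⊕ N`. An element `(s, n)`
of the latter is a unit as soon as `s` is, so the universal property of `S` extends this
homomorphism uniquely to `S`, and its second component is the unique derivation of `S`
extending `d`.

A biderivation is extended one variable at a time. Uniqueness of extended derivations shows that
each partial extension is still a derivation in the other variable, and that the result is the
only biderivation extending `b`. For the lifting property, the Leibniz rule reduces membership of
`b' x y` in `(I·S) • N` to generators `x = i/1` of `I·S`, and a derivation with values modulo
`(I·S) • N` that vanishes on `R` vanishes on `S`.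
-/

namespace IsDerivationFun

variable {T N : Type*} [CommRing T] [AddCommGroup N] [Module T N] {d d' : T → N}

theorem map_one (hd : IsDerivationFun d) : d 1 = 0 := by
  simpa using hd.2 1 1

theorem map_zero (hd : IsDerivationFun d) : d 0 = 0 := by
  simpa using hd.1 0 0

theorem add (hd : IsDerivationFun d) (hd' : IsDerivationFun d') : IsDerivationFun (d + d') :=
  ⟨fun x y => by simp only [Pi.add_apply, hd.1, hd'.1]; abel,
   fun x y => by simp only [Pi.add_apply, hd.2, hd'.2, smul_add]; abel⟩

theorem smul {α : Type*} [Monoid α] [DistribMulAction α N] [SMulCommClass α T N] (c : α)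
    (hd : IsDerivationFun d) : IsDerivationFun (c • d) :=
  ⟨fun x y => by simp only [Pi.smul_apply, hd.1, smul_add],
   fun x y => by simp only [Pi.smul_apply, hd.2, smul_add, smul_comm c]⟩

theorem comp_linearMap {N' : Type*} [AddCommGroup N'] [Module T N'] (hd : IsDerivationFun d)
    (f : N →ₗ[T] N') : IsDerivationFun (f ∘ d) :=
  ⟨fun x y => by simp [hd.1], fun x y => by simp [hd.2]⟩

theorem mem_span_smul_top {E : T → N} (hE : IsDerivationFun E) {s : Set T}
    (h : ∀ g ∈ s, E g ∈ Ideal.span s • (⊤ : Submodule T N)) {x : T} (hx : x ∈ Ideal.span s) :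
    E x ∈ Ideal.span s • (⊤ : Submodule T N) := by
  induction hx using Submodule.span_induction with
  | mem g hg => exact h g hg
  | zero => rw [hE.map_zero]; exact zero_mem _
  | add x y _ _ hx hy => simpa [hE.1] using add_mem hx hy
  | smul a x hx' hx =>
    rw [smul_eq_mul, hE.2]
    exact add_mem (Submodule.smul_mem _ a hx) (Submodule.smul_mem_smul hx' trivial)

end IsDerivationFun

section TrivSqZeroExt

/-- Lets `T` act on the right of `N`, so that `TrivSqZeroExt T N` is a commutative ring. -/
abbrev Module.opOfComm (T N : Type*) [CommRing T] [AddCommGroup N] [Module T N] :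
    Module Tᵐᵒᵖ N :=
  Module.compHom N ((RingHom.id T).fromOpposite mul_comm)

attribute [local instance] Module.opOfComm

theorem isCentralScalar_opOfComm (T N : Type*) [CommRing T] [AddCommGroup N] [Module T N] :
    IsCentralScalar T N :=
  ⟨fun _ _ => rfl⟩

attribute [local instance] isCentralScalar_opOfComm

namespace IsDerivationFun

variable {R S N : Type*} [CommRing R] [CommRing S] [Algebra R S] [AddCommGroup N] [Module S N]

section

variable [Module R N] [IsScalarTower R S N]

def toTrivSqZeroExt {d : R → N} (hd : IsDerivationFun d) : R →+* TrivSqZeroExt S N where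
  toFun r := TrivSqZeroExt.inl (algebraMap R S r) + TrivSqZeroExt.inr (d r)
  map_one' := by ext <;> simp [hd.map_one]
  map_mul' x y := by ext <;> simp [hd.2, algebraMap_smul, add_comm]
  map_zero' := by ext <;> simp [hd.map_zero]
  map_add' x y := by ext <;> simp [hd.1, add_add_add_comm]

@[simp]
theorem fst_toTrivSqZeroExt {d : R → N} (hd : IsDerivationFun d) (r : R) :
    (hd.toTrivSqZeroExt (S := S) r).fst = algebraMap R S r := by
  simp [toTrivSqZeroExt]

@[simp]
theorem snd_toTrivSqZeroExt {d : R → N} (hd : IsDerivationFun d) (r : R) :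
    (hd.toTrivSqZeroExt (S := S) r).snd = d r := by
  simp [toTrivSqZeroExt]

end

theorem ext_of_isLocalization (W : Submonoid R) [IsLocalization W S] {E E' : S → N}
    (hE : IsDerivationFun E) (hE' : IsDerivationFun E')
    (h : ∀ r : R, E (algebraMap R S r) = E' (algebraMap R S r)) : E = E' := by
  have := IsLocalization.ringHom_ext W (j := hE.toTrivSqZeroExt (S := S))
    (k := hE'.toTrivSqZeroExt (S := S))
    (RingHom.ext fun r => TrivSqZeroExt.ext (by simp) (by simp [h]))
  funext x
  simpa using congrArg (fun f => (f x).snd) this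

theorem mem_of_algebraMap_mem (W : Submonoid R) [IsLocalization W S] {E : S → N}
    (hE : IsDerivationFun E) (P : Submodule S N) (h : ∀ r : R, E (algebraMap R S r) ∈ P)
    (x : S) : E x ∈ P := by
  have := ext_of_isLocalization W (hE.comp_linearMap P.mkQ) (E' := 0) ⟨by simp, by simp⟩
    (fun r => (Submodule.Quotient.mk_eq_zero P).mpr (h r))
  exact (Submodule.Quotient.mk_eq_zero P).mp (congrFun this x)

variable [Module R N] [IsScalarTower R S N]
  (S) (W : Submonoid R) [IsLocalization W S] {d : R → N} (hd : IsDerivationFun d)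

noncomputable def liftTrivSqZeroExt : S →+* TrivSqZeroExt S N :=
  IsLocalization.lift (M := W) (g := hd.toTrivSqZeroExt) fun s =>
    by simpa [TrivSqZeroExt.isUnit_iff_isUnit_fst] using IsLocalization.map_units S s

theorem fst_liftTrivSqZeroExt (x : S) : (hd.liftTrivSqZeroExt S W x).fst = x := by
  have : (TrivSqZeroExt.fstHom ℤ S N : _ →+* S).comp (hd.liftTrivSqZeroExt S W) = RingHom.id S :=
    IsLocalization.ringHom_ext W (RingHom.ext fun r => by simp [liftTrivSqZeroExt])
  exact congrArg (fun f => f x) this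

noncomputable def localize : S → N := fun x => (hd.liftTrivSqZeroExt S W x).snd

theorem localize_algebraMap (r : R) : hd.localize S W (algebraMap R S r) = d r := by
  simp [localize, liftTrivSqZeroExt]

theorem isDerivationFun_localize : IsDerivationFun (hd.localize S W) :=
  ⟨fun x y => by simp [localize], fun x y => by
    simp [localize, TrivSqZeroExt.snd_mul, fst_liftTrivSqZeroExt, add_comm]⟩

end IsDerivationFun

end TrivSqZeroExt

namespace IsBiderivationFun

section Basic

variable {T N : Type*} [CommRing T] [AddCommGroup N] [Module T N] {b : T → T → N}

theorem flip (hb : IsBiderivationFun b) : IsBiderivationFun (fun x y => b y x) :=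
  ⟨hb.2, hb.1⟩

theorem comp_linearMap {N' : Type*} [AddCommGroup N'] [Module T N'] (hb : IsBiderivationFun b)
    (f : N →ₗ[T] N') : IsBiderivationFun (fun x y => f (b x y)) :=
  ⟨fun x => (hb.1 x).comp_linearMap f, fun y => (hb.2 y).comp_linearMap f⟩

end Basic

section Localization

variable {R S N : Type*} [CommRing R] [CommRing S] [Algebra R S] [AddCommGroup N] [Module S N]

theorem mem_map_smul_top (W : Submonoid R) [IsLocalization W S] {B : S → S → N}
    (hB : IsBiderivationFun B) (I : Ideal R)
    (h : ∀ i ∈ I, ∀ r : R,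
      B (algebraMap R S i) (algebraMap R S r) ∈ I.map (algebraMap R S) • (⊤ : Submodule S N))
    {x : S} (hx : x ∈ I.map (algebraMap R S)) (y : S) :
    B x y ∈ I.map (algebraMap R S) • (⊤ : Submodule S N) := by
  refine (hB.2 y).mem_span_smul_top ?_ hx
  rintro _ ⟨i, hi, rfl⟩
  exact (hB.1 _).mem_of_algebraMap_mem W _ (h i hi) y

variable [Module R N] [IsScalarTower R S N]
  (S) (W : Submonoid R) [IsLocalization W S] {b : R → R → N} (hb : IsBiderivationFun b)

theorem isDerivationFun_localize_apply (y : S) :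
    IsDerivationFun (fun r => (hb.1 r).localize S W y) := by
  have hD (r : R) := (hb.1 r).isDerivationFun_localize S W
  constructor
  · intro r r'
    refine congrFun (IsDerivationFun.ext_of_isLocalization W (hD _) ((hD r).add (hD r'))
      fun a => ?_) y
    simp [IsDerivationFun.localize_algebraMap, (hb.2 a).1]
  · intro r r'
    refine congrFun (IsDerivationFun.ext_of_isLocalization W (hD _)
      (((hD r').smul r).add ((hD r).smul r')) fun a => ?_) y
    simp [IsDerivationFun.localize_algebraMap, (hb.2 a).2]

noncomputable def localize : S → S → N := fun x y =>
  (hb.isDerivationFun_localize_apply S W y).localize S W x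

theorem localize_algebraMap_left (r : R) (y : S) :
    hb.localize S W (algebraMap R S r) y = (hb.1 r).localize S W y :=
  (hb.isDerivationFun_localize_apply S W y).localize_algebraMap S W r

theorem localize_algebraMap (r r' : R) :
    hb.localize S W (algebraMap R S r) (algebraMap R S r') = b r r' := by
  rw [localize_algebraMap_left, IsDerivationFun.localize_algebraMap]

theorem isBiderivationFun_localize : IsBiderivationFun (hb.localize S W) := by
  have hD (r : R) := (hb.1 r).isDerivationFun_localize S W
  have hB (y : S) := (hb.isDerivationFun_localize_apply S W y).isDerivationFun_localize S W
  refine ⟨fun x => ⟨fun y z => ?_, fun y z => ?_⟩, hB⟩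
  · refine congrFun (IsDerivationFun.ext_of_isLocalization W (hB _) ((hB y).add (hB z))
      fun r => ?_) x
    simp [IsDerivationFun.localize_algebraMap, (hD r).1]
  · refine congrFun (IsDerivationFun.ext_of_isLocalization W (hB _)
      (((hB z).smul y).add ((hB y).smul z)) fun r => ?_) x
    simp [IsDerivationFun.localize_algebraMap, (hD r).2]

theorem eq_localize {b' : S → S → N} (hb' : IsBiderivationFun b')
    (h : ∀ r r' : R, b' (algebraMap R S r) (algebraMap R S r') = b r r') :
    b' = hb.localize S W := by
  have left (r : R) : b' (algebraMap R S r) = (hb.1 r).localize S W :=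
    IsDerivationFun.ext_of_isLocalization W (hb'.1 _) ((hb.1 r).isDerivationFun_localize S W)
      fun r' => by rw [h, IsDerivationFun.localize_algebraMap]
  funext x y
  exact congrFun (IsDerivationFun.ext_of_isLocalization W (hb'.2 y)
    ((hb.isBiderivationFun_localize S W).2 y)
    fun r => by rw [left]; exact (localize_algebraMap_left S W hb r y).symm) x

end Localization

end IsBiderivationFun

theorem LinearMap.map_mem_map_smul_top {R S M N : Type*} [CommRing R] [CommRing S] [Algebra R S]
    [AddCommGroup M] [Module R M] [AddCommGroup N] [Module S N] [Module R N]
    [IsScalarTower R S N] (f : M →ₗ[R] N) {I : Ideal R} {m : M}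
    (hm : m ∈ I • (⊤ : Submodule R M)) :
    f m ∈ I.map (algebraMap R S) • (⊤ : Submodule S N) := by
  let P : Submodule S N := I.map (algebraMap R S) • ⊤
  refine (Submodule.smul_le (P := (P.restrictScalars R).comap f)).mpr (fun r hr n _ => ?_) hm
  change f (r • n) ∈ P
  rw [map_smul, ← algebraMap_smul S r (f n)]
  exact Submodule.smul_mem_smul (Ideal.mem_map_of_mem _ hr) trivial

theorem biderivation_localization_general
    {R M : Type*} [CommRing R] [AddCommGroup M] [Module R M]
    (b : R → R → M) (hb : IsBiderivationFun b)
    (Msub : Submonoid R) :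
    ∃ b' : Localization Msub → Localization Msub → LocalizedModule Msub M,
      (IsBiderivationFun b' ∧
        ∀ x y : R, b' (algebraMap R (Localization Msub) x) (algebraMap R (Localization Msub) y)
          = LocalizedModule.mkLinearMap Msub M (b x y)) ∧
      (∀ b'' : Localization Msub → Localization Msub → LocalizedModule Msub M,
        (IsBiderivationFun b'' ∧
          ∀ x y : R, b'' (algebraMap R (Localization Msub) x) (algebraMap R (Localization Msub) y)
            = LocalizedModule.mkLinearMap Msub M (b x y)) → b'' = b') ∧
      (∀ I J : Ideal R,
        (∀ i ∈ I, ∀ r : R, b i r ∈ I • (⊤ : Submodule R M)) →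
        (∀ r : R, ∀ j ∈ J, b r j ∈ J • (⊤ : Submodule R M)) →
        (∀ x ∈ Ideal.map (algebraMap R (Localization Msub)) I, ∀ y : Localization Msub,
          b' x y ∈ Ideal.map (algebraMap R (Localization Msub)) I •
            (⊤ : Submodule (Localization Msub) (LocalizedModule Msub M))) ∧
        (∀ x : Localization Msub, ∀ y ∈ Ideal.map (algebraMap R (Localization Msub)) J,
          b' x y ∈ Ideal.map (algebraMap R (Localization Msub)) J •
            (⊤ : Submodule (Localization Msub) (LocalizedModule Msub M)))) := by
  have hb₀ := hb.comp_linearMap (LocalizedModule.mkLinearMap Msub M)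
  have hB := hb₀.isBiderivationFun_localize (Localization Msub) Msub
  have hB_alg := hb₀.localize_algebraMap (Localization Msub) Msub
  refine ⟨_, ⟨hB, hB_alg⟩, fun b'' h => hb₀.eq_localize _ Msub h.1 h.2, fun I J hI hJ => ⟨?_, ?_⟩⟩
  · refine fun x hx y => hB.mem_map_smul_top Msub I (fun i hi r => ?_) hx y
    rw [hB_alg]
    exact LinearMap.map_mem_map_smul_top _ (hI i hi r)
  · refine fun x y hy => hB.flip.mem_map_smul_top Msub J (fun j hj r => ?_) hy x
    rw [hB_alg]
    exact LinearMap.map_mem_map_smul_top _ (hJ r j hj)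

/-- Localisation theorem (Theorem 2.9 of "Commutative bidifferential algebra"):
a biderivation on `R` with values in `M` extends uniquely to the localisation at a
multiplicative set avoiding `0`, and the extension is lifting. -/
theorem biderivation_localization
    {R M : Type*} [CommRing R] [AddCommGroup M] [Module R M]
    (b : R → R → M) (hb : IsBiderivationFun b)
    (Msub : Submonoid R) (h0 : (0 : R) ∉ Msub) :
    ∃ b' : Localization Msub → Localization Msub → LocalizedModule Msub M,
      (IsBiderivationFun b' ∧
        ∀ x y : R, b' (algebraMap R (Localization Msub) x) (algebraMap R (Localization Msub) y)
          = LocalizedModule.mkLinearMap Msub M (b x y)) ∧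
      (∀ b'' : Localization Msub → Localization Msub → LocalizedModule Msub M,
        (IsBiderivationFun b'' ∧
          ∀ x y : R, b'' (algebraMap R (Localization Msub) x) (algebraMap R (Localization Msub) y)
            = LocalizedModule.mkLinearMap Msub M (b x y)) → b'' = b') ∧
      (∀ I J : Ideal R,
        (∀ i ∈ I, ∀ r : R, b i r ∈ I • (⊤ : Submodule R M)) →
        (∀ r : R, ∀ j ∈ J, b r j ∈ J • (⊤ : Submodule R M)) →
        (∀ x ∈ Ideal.map (algebraMap R (Localization Msub)) I, ∀ y : Localization Msub,
          b' x y ∈ Ideal.map (algebraMap R (Localization Msub)) I •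
            (⊤ : Submodule (Localization Msub) (LocalizedModule Msub M))) ∧
        (∀ x : Localization Msub, ∀ y ∈ Ideal.map (algebraMap R (Localization Msub)) J,
          b' x y ∈ Ideal.map (algebraMap R (Localization Msub)) J •
            (⊤ : Submodule (Localization Msub) (LocalizedModule Msub M)))) :=
  biderivation_localization_general b hb Msub
end

section
/- A biderivation on an integral domain extends uniquely to the fraction field: if R is an integral domain and b is a biderivation on R (with values in R), then there exists a unique biderivation b' on the fraction field Frac(R) such that the canonical embedding R → Frac(R) is bidifferential, i.e., b'(x/1, y/1) = b(x,y)/1 for all x, y ∈ R. -/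
/-- A derivation on a commutative ring `R` (with values in `R`). -/
def IsDerivO {R : Type*} [CommRing R] (d : R → R) : Prop :=
  (∀ x y : R, d (x + y) = d x + d y) ∧ (∀ x y : R, d (x * y) = x * d y + y * d x)

/-- A biderivation on a commutative ring `R`: a map `R → R → R` that is a derivation in
each argument. -/
def IsBiderivO {R : Type*} [CommRing R] (b : R → R → R) : Prop :=
  (∀ r : R, IsDerivO (b r)) ∧ (∀ s : R, IsDerivO (fun r => b r s))

section Aux

variable {R : Type*} [CommRing R] [IsDomain R]

private lemma phi_ne (s : nonZeroDivisors R) :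
    algebraMap R (FractionRing R) (s : R) ≠ 0 :=
  IsFractionRing.to_map_ne_zero_of_mem_nonZeroDivisors s.2

/-- A derivation from `R` with values in its fraction field. -/
def IsDerivTo (d : R → FractionRing R) : Prop :=
  (∀ x y : R, d (x + y) = d x + d y) ∧
  (∀ x y : R, d (x * y) =
    algebraMap R (FractionRing R) x * d y + algebraMap R (FractionRing R) y * d x)

/-- Extension of a derivation `R → Frac R` to `Frac R → Frac R`. -/
noncomputable def extD (d : R → FractionRing R) (hd : IsDerivTo d) :
    FractionRing R → FractionRing R := fun a =>
  Localization.liftOn a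
    (fun x s => (algebraMap R (FractionRing R) s * d x
        - algebraMap R (FractionRing R) x * d s) / (algebraMap R (FractionRing R) s) ^ 2)
    (by
      intro x y s t h
      obtain ⟨c, hc⟩ := Localization.r_iff_exists.mp h
      have h1 : (t : R) * x = (s : R) * y :=
        mul_left_cancel₀ (nonZeroDivisors.coe_ne_zero c) hc
      have h2 : algebraMap R (FractionRing R) t * d x + algebraMap R (FractionRing R) x * d t
          = algebraMap R (FractionRing R) s * d y + algebraMap R (FractionRing R) y * d s := by
        rw [← hd.2 (t : R) x, ← hd.2 (s : R) y, h1]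
      have h3 : algebraMap R (FractionRing R) t * algebraMap R (FractionRing R) x
          = algebraMap R (FractionRing R) s * algebraMap R (FractionRing R) y := by
        rw [← map_mul, ← map_mul, h1]
      rw [div_eq_div_iff (pow_ne_zero 2 (phi_ne s)) (pow_ne_zero 2 (phi_ne t))]
      linear_combination (algebraMap R (FractionRing R) t * algebraMap R (FractionRing R) s) * h2
        - (algebraMap R (FractionRing R) t * d (s : R)
           + algebraMap R (FractionRing R) s * d (t : R)) * h3)

lemma extD_mk (d : R → FractionRing R) (hd : IsDerivTo d) (x : R) (s : nonZeroDivisors R) :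
    extD d hd (Localization.mk x s) =
      (algebraMap R (FractionRing R) s * d x - algebraMap R (FractionRing R) x * d s)
        / (algebraMap R (FractionRing R) s) ^ 2 := rfl

lemma IsDerivTo.one (d : R → FractionRing R) (hd : IsDerivTo d) : d 1 = 0 := by
  have h := hd.2 1 1
  simp only [mul_one, map_one, one_mul] at h
  exact left_eq_add.mp h

lemma extD_map (d : R → FractionRing R) (hd : IsDerivTo d) (x : R) :
    extD d hd (algebraMap R (FractionRing R) x) = d x := by
  rw [← Localization.mk_one_eq_algebraMap, extD_mk]
  simp [hd.one d]

lemma extD_isDeriv (d : R → FractionRing R) (hd : IsDerivTo d) : IsDerivO (extD d hd) := by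
  constructor
  · intro a c
    refine Localization.induction_on₂ a c ?_
    rintro ⟨x, s⟩ ⟨y, t⟩
    rw [Localization.add_mk, extD_mk, extD_mk, extD_mk]
    have hs := phi_ne s; have ht := phi_ne t
    simp only [Submonoid.coe_mul, hd.1, hd.2, map_add, map_mul]
    field_simp
    ring
  · intro a c
    refine Localization.induction_on₂ a c ?_
    rintro ⟨x, s⟩ ⟨y, t⟩
    rw [Localization.mk_mul, extD_mk, extD_mk, extD_mk]
    have hs := phi_ne s; have ht := phi_ne t
    simp only [Submonoid.coe_mul, hd.2, map_mul, FractionRing.mk_eq_div]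
    field_simp
    ring

/-- A derivation on the fraction field is determined by its values on `R`. -/
lemma deriv_ext_unique (D1 D2 : FractionRing R → FractionRing R)
    (h1 : IsDerivO D1) (h2 : IsDerivO D2)
    (h : ∀ x : R, D1 (algebraMap R (FractionRing R) x) = D2 (algebraMap R (FractionRing R) x)) :
    D1 = D2 := by
  funext a
  refine Localization.induction_on a ?_
  rintro ⟨x, s⟩
  have key : Localization.mk x s * algebraMap R (FractionRing R) (s : R)
      = algebraMap R (FractionRing R) x := by
    rw [FractionRing.mk_eq_div]
    field_simp
  have e1 := h1.2 (Localization.mk x s) (algebraMap R (FractionRing R) (s : R))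
  have e2 := h2.2 (Localization.mk x s) (algebraMap R (FractionRing R) (s : R))
  rw [key] at e1 e2
  have hx := h x
  have hs' := h (s : R)
  apply mul_left_cancel₀ (phi_ne s)
  linear_combination -e1 + e2 + hx - Localization.mk x s * hs'

end Aux

section B

variable {R : Type*} [CommRing R] [IsDomain R] (b : R → R → R) (hb : IsBiderivO b)

/-- Extension of a biderivation on the second argument. -/
noncomputable def B1 : R → FractionRing R → FractionRing R := fun r =>
  extD (fun y => algebraMap R (FractionRing R) (b r y))
    ⟨fun x y => by simp only [(hb.1 r).1, map_add],
     fun x y => by simp only [(hb.1 r).2, map_add, map_mul]⟩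

lemma B1_map (r y : R) :
    B1 b hb r (algebraMap R (FractionRing R) y) = algebraMap R (FractionRing R) (b r y) :=
  extD_map _ _ y

lemma B1_deriv (r : R) : IsDerivO (B1 b hb r) := extD_isDeriv _ _

lemma B1_mk (r x : R) (s : nonZeroDivisors R) :
    B1 b hb r (Localization.mk x s) =
      (algebraMap R (FractionRing R) s * algebraMap R (FractionRing R) (b r x)
        - algebraMap R (FractionRing R) x * algebraMap R (FractionRing R) (b r (s : R)))
        / (algebraMap R (FractionRing R) s) ^ 2 := rfl

lemma B1_isDerivTo (c : FractionRing R) : IsDerivTo (fun r => B1 b hb r c) := by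
  constructor
  · intro x y
    refine Localization.induction_on c ?_
    rintro ⟨z, t⟩
    have h1 : b (x + y) z = b x z + b y z := (hb.2 z).1 x y
    have h2 : b (x + y) (t : R) = b x t + b y t := (hb.2 (t : R)).1 x y
    simp only [B1_mk, h1, h2, map_add]
    have ht := phi_ne t
    field_simp
    ring
  · intro x y
    refine Localization.induction_on c ?_
    rintro ⟨z, t⟩
    have h1 : b (x * y) z = x * b y z + y * b x z := (hb.2 z).2 x y
    have h2 : b (x * y) (t : R) = x * b y t + y * b x t := (hb.2 (t : R)).2 x y
    simp only [B1_mk, h1, h2, map_add, map_mul]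
    have ht := phi_ne t
    field_simp
    ring

/-- Full extension of a biderivation to the fraction field. -/
noncomputable def Bext : FractionRing R → FractionRing R → FractionRing R := fun a c =>
  extD (fun r => B1 b hb r c) (B1_isDerivTo b hb c) a

lemma Bext_map1 (x : R) (c : FractionRing R) :
    Bext b hb (algebraMap R (FractionRing R) x) c = B1 b hb x c :=
  extD_map _ _ x

lemma Bext_map (x y : R) :
    Bext b hb (algebraMap R (FractionRing R) x) (algebraMap R (FractionRing R) y)
      = algebraMap R (FractionRing R) (b x y) := by
  rw [Bext_map1, B1_map]

lemma Bext_deriv1 (c : FractionRing R) : IsDerivO (fun a => Bext b hb a c) :=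
  extD_isDeriv _ _

lemma Bext_mk1 (x : R) (s : nonZeroDivisors R) (c : FractionRing R) :
    Bext b hb (Localization.mk x s) c =
      (algebraMap R (FractionRing R) s * B1 b hb x c
        - algebraMap R (FractionRing R) x * B1 b hb (s : R) c)
        / (algebraMap R (FractionRing R) s) ^ 2 := rfl

lemma Bext_deriv2 (a : FractionRing R) : IsDerivO (Bext b hb a) := by
  refine Localization.induction_on a ?_
  rintro ⟨x, s⟩
  have hs := phi_ne s
  constructor
  · intro c c'
    simp only [Bext_mk1, (B1_deriv b hb x).1, (B1_deriv b hb (s : R)).1]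
    field_simp
    ring
  · intro c c'
    simp only [Bext_mk1, (B1_deriv b hb x).2, (B1_deriv b hb (s : R)).2]
    field_simp
    ring

end B

/-- A biderivation on an integral domain extends uniquely to the fraction field
(Corollary 2.10 of "Commutative bidifferential algebra"). -/
theorem biderivation_extends_to_fractionRing
    {R : Type*} [CommRing R] [IsDomain R]
    (b : R → R → R) (hb : IsBiderivO b) :
    ∃! b' : FractionRing R → FractionRing R → FractionRing R,
      IsBiderivO b' ∧
      ∀ x y : R, b' (algebraMap R (FractionRing R) x) (algebraMap R (FractionRing R) y)
        = algebraMap R (FractionRing R) (b x y) := by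
  refine ⟨Bext b hb, ⟨⟨Bext_deriv2 b hb, Bext_deriv1 b hb⟩, Bext_map b hb⟩, ?_⟩
  rintro b'' ⟨hB, hcomp⟩
  have step1 : ∀ y : R, (fun a => b'' a (algebraMap R (FractionRing R) y))
      = (fun a => Bext b hb a (algebraMap R (FractionRing R) y)) := fun y =>
    deriv_ext_unique _ _ (hB.2 _) (Bext_deriv1 b hb _)
      (fun x => by rw [hcomp x y, Bext_map])
  funext a c
  have step2 : (fun c => b'' a c) = (fun c => Bext b hb a c) :=
    deriv_ext_unique _ _ (hB.1 a) (Bext_deriv2 b hb a)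
      (fun y => congrFun (step1 y) a)
  exact congrFun step2 c
end

section
/- A biderivation on a field extends uniquely to the separable closure: let K be a field and b a biderivation on K. Then there exists a unique biderivation b' on the separable closure K^sep of K (the relative separable closure of K inside an algebraic closure of K) such that the inclusion K → K^sep is bidifferential, i.e., b'(x, y) = b(x, y) for all x, y in the image of K. -/
universe u

set_option maxHeartbeats 1000000 in
open TrivSqZeroExt in
theorem derivO_extend {K L : Type u} [Field K] [Field L] [Algebra K L]
    [Algebra.IsSeparable K L] (d : K → L)
    (hadd : ∀ x y, d (x + y) = d x + d y)
    (hmul : ∀ x y, d (x * y) = algebraMap K L x * d y + algebraMap K L y * d x) :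
    ∃! D : L → L, IsDerivO D ∧ ∀ x, D (algebraMap K L x) = d x := by
  classical
  have hd0 : d 0 = 0 := by simpa using hadd 0 0
  have hd1 : d 1 = 0 := by simpa using hmul 1 1
  let φ : K →+* TrivSqZeroExt L L :=
    { toFun := fun x => inl (algebraMap K L x) + inr (d x)
      map_one' := by simp [hd1]
      map_mul' := fun x y => by
        refine TrivSqZeroExt.ext ?_ ?_ <;>
          simp [hmul, smul_eq_mul, MulOpposite.smul_eq_mul_unop, mul_comm]
      map_zero' := by simp [hd0]
      map_add' := fun x y => by
        refine TrivSqZeroExt.ext ?_ ?_ <;> simp [hadd, add_comm, add_left_comm] }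
  letI : Algebra K (TrivSqZeroExt L L) := φ.toAlgebra
  have halg : ∀ x : K,
      algebraMap K (TrivSqZeroExt L L) x = inl (algebraMap K L x) + inr (d x) := fun _ => rfl
  haveI : Algebra.FormallyEtale K L := Algebra.FormallyEtale.of_isSeparable K L
  let g : TrivSqZeroExt L L →ₐ[K] L :=
    { toFun := fun p => p.fst
      map_one' := rfl
      map_mul' := fun p q => by simp
      map_zero' := rfl
      map_add' := fun p q => by simp
      commutes' := fun k => by rw [halg]; simp }
  have hgfst : ∀ p : TrivSqZeroExt L L, g p = p.fst := fun _ => rfl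
  have hgsurj : Function.Surjective g := fun x => ⟨inl x, rfl⟩
  have hker : IsNilpotent (RingHom.ker (g : TrivSqZeroExt L L →+* L)) := by
    refine ⟨2, le_bot_iff.mp ?_⟩
    rw [Submodule.pow_succ, Submodule.pow_one]
    refine Ideal.mul_le.mpr fun p hp q hq => ?_
    have hp' : p.fst = 0 := hp
    have hq' : q.fst = 0 := hq
    refine TrivSqZeroExt.ext ?_ ?_ <;> simp [hp', hq']
  -- the (unique) algebra-hom encoding of derivations
  have mkhom : ∀ D' : L → L, IsDerivO D' → (∀ x, D' (algebraMap K L x) = d x) →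
      ∃ ψ : L →ₐ[K] TrivSqZeroExt L L, ∀ x, ψ x = inl x + inr (D' x) := by
    rintro D' ⟨hD'add, hD'mul⟩ hD'ext
    have hD'0 : D' 0 = 0 := by simpa using hD'add 0 0
    have hD'1 : D' 1 = 0 := by simpa using hD'mul 1 1
    refine ⟨{ toFun := fun x => inl x + inr (D' x)
              map_one' := by simp [hD'1]
              map_mul' := fun x y => by
                refine TrivSqZeroExt.ext ?_ ?_ <;>
                  simp [hD'mul, smul_eq_mul, MulOpposite.smul_eq_mul_unop, mul_comm]
              map_zero' := by simp [hD'0]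
              map_add' := fun x y => by
                refine TrivSqZeroExt.ext ?_ ?_ <;> simp [hD'add, add_comm, add_left_comm]
              commutes' := fun k => by
                rw [halg]
                refine TrivSqZeroExt.ext ?_ ?_ <;> simp [hD'ext] }, fun x => rfl⟩
  -- uniqueness
  have huniq : ∀ D₁ D₂ : L → L,
      (IsDerivO D₁ ∧ ∀ x, D₁ (algebraMap K L x) = d x) →
      (IsDerivO D₂ ∧ ∀ x, D₂ (algebraMap K L x) = d x) → D₁ = D₂ := by
    rintro D₁ D₂ ⟨h₁, h₁e⟩ ⟨h₂, h₂e⟩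
    obtain ⟨ψ₁, hψ₁⟩ := mkhom D₁ h₁ h₁e
    obtain ⟨ψ₂, hψ₂⟩ := mkhom D₂ h₂ h₂e
    have : ψ₁ = ψ₂ := by
      refine Algebra.FormallyUnramified.lift_unique_of_ringHom
        (g : TrivSqZeroExt L L →+* L) hker ψ₁ ψ₂ ?_
      ext x
      show (ψ₁ x).fst = (ψ₂ x).fst
      rw [hψ₁, hψ₂]
      simp
    funext x
    have h := congrArg (fun f : L →ₐ[K] TrivSqZeroExt L L => (f x).snd) this
    rw [hψ₁, hψ₂] at h
    simpa using h
  -- existence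
  obtain ⟨lift, hlift⟩ : ∃ lift : L →ₐ[K] TrivSqZeroExt L L, ∀ x, (lift x).fst = x :=
    ⟨Algebra.FormallySmooth.liftOfSurjective (AlgHom.id K L) g hgsurj hker,
     fun x => Algebra.FormallySmooth.liftOfSurjective_apply (AlgHom.id K L) g hgsurj hker x⟩
  have hprop : IsDerivO (fun x => (lift x).snd) ∧
      ∀ x, (fun x => (lift x).snd) (algebraMap K L x) = d x := by
    refine ⟨⟨fun x y => by simp, fun x y => ?_⟩, fun x => ?_⟩
    · have h := congrArg TrivSqZeroExt.snd (map_mul lift x y)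
      dsimp only
      rw [h, TrivSqZeroExt.snd_mul, hlift, hlift]
      simp only [smul_eq_mul, MulOpposite.smul_eq_mul_unop, MulOpposite.unop_op]
      ring
    · have h1 : lift (algebraMap K L x) = algebraMap K (TrivSqZeroExt L L) x := lift.commutes x
      dsimp only
      rw [h1, halg, TrivSqZeroExt.snd_add, snd_inl, snd_inr, zero_add]
  exact ⟨fun x => (lift x).snd, hprop, fun D' hD' => huniq D' _ hD' hprop⟩

theorem derivO_unique {K L : Type u} [Field K] [Field L] [Algebra K L]
    [Algebra.IsSeparable K L] {D₁ D₂ : L → L} (h₁ : IsDerivO D₁) (h₂ : IsDerivO D₂)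
    (h : ∀ x : K, D₁ (algebraMap K L x) = D₂ (algebraMap K L x)) : D₁ = D₂ := by
  have key := derivO_extend (K := K) (L := L) (fun x => D₂ (algebraMap K L x))
    (fun x y => by rw [map_add, h₂.1])
    (fun x y => by rw [map_mul, h₂.2])
  exact (key.unique ⟨h₁, fun x => h x⟩ ⟨h₂, fun _ => rfl⟩)

theorem isDerivO_add {R : Type*} [CommRing R] {D₁ D₂ : R → R}
    (h₁ : IsDerivO D₁) (h₂ : IsDerivO D₂) : IsDerivO (fun x => D₁ x + D₂ x) :=
  ⟨fun x y => by dsimp only; rw [h₁.1, h₂.1]; ring,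
   fun x y => by dsimp only; rw [h₁.2, h₂.2]; ring⟩

theorem isDerivO_smul {R : Type*} [CommRing R] (c : R) {D : R → R}
    (h : IsDerivO D) : IsDerivO (fun x => c * D x) :=
  ⟨fun x y => by dsimp only; rw [h.1]; ring,
   fun x y => by dsimp only; rw [h.2]; ring⟩

theorem isDerivO_comb {R : Type*} [CommRing R] (c c' : R) {D D' : R → R}
    (h : IsDerivO D) (h' : IsDerivO D') : IsDerivO (fun x => c * D x + c' * D' x) :=
  isDerivO_add (isDerivO_smul c h) (isDerivO_smul c' h')

/-- A biderivation on a field extends uniquely to the separable closure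
(Corollary 2.12 of "Commutative bidifferential algebra"). Here the separable closure is
realised as the relative separable closure of `K` inside an algebraic closure of `K`. -/
theorem biderivation_extends_to_separableClosure
    (K : Type*) [Field K] (b : K → K → K) (hb : IsBiderivO b) :
    ∃! b' : separableClosure K (AlgebraicClosure K) →
            separableClosure K (AlgebraicClosure K) →
            separableClosure K (AlgebraicClosure K),
      IsBiderivO b' ∧
      ∀ x y : K,
        b' (algebraMap K (separableClosure K (AlgebraicClosure K)) x)
            (algebraMap K (separableClosure K (AlgebraicClosure K)) y)
          = algebraMap K (separableClosure K (AlgebraicClosure K)) (b x y) := by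
  classical
  set L := separableClosure K (AlgebraicClosure K) with hL
  let σ : K →+* L := algebraMap K L
  -- Step 1: extend in the second variable, for each fixed first variable in K
  have hE := fun r : K => derivO_extend (K := K) (L := L) (fun y => σ (b r y))
    (fun x y => by rw [(hb.1 r).1, map_add])
    (fun x y => by
      have h : b r (x * y) = x * b r y + y * b r x := (hb.1 r).2 x y
      rw [h, map_add, map_mul, map_mul])
  choose E hEP hEu using fun r => hE r
  have hE1 : ∀ r, IsDerivO (E r) := fun r => (hEP r).1
  have hE2 : ∀ r y, E r (σ y) = σ (b r y) := fun r => (hEP r).2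
  -- E is additive/Leibniz in r
  have Eadd : ∀ r r' : K, E (r + r') = fun y => E r y + E r' y := by
    intro r r'
    refine derivO_unique (K := K) (hE1 _) (isDerivO_add (hE1 r) (hE1 r')) fun x => ?_
    have h : b (r + r') x = b r x + b r' x := (hb.2 x).1 r r'
    rw [hE2, hE2, hE2, h, map_add]
  have Emul : ∀ r r' : K, E (r * r') = fun y => σ r * E r' y + σ r' * E r y := by
    intro r r'
    refine derivO_unique (K := K) (hE1 _) (isDerivO_comb _ _ (hE1 r') (hE1 r)) fun x => ?_
    have h : b (r * r') x = r * b r' x + r' * b r x := (hb.2 x).2 r r'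
    rw [hE2, hE2, hE2, h, map_add, map_mul, map_mul]
  -- Step 2: extend in the first variable
  have hF := fun y : L => derivO_extend (K := K) (L := L) (fun r => E r y)
    (fun r r' => by rw [Eadd])
    (fun r r' => by rw [Emul])
  choose F hFP hFu using fun y => hF y
  have hF1 : ∀ y, IsDerivO (F y) := fun y => (hFP y).1
  have hF2 : ∀ y r, F y (σ r) = E r y := fun y => (hFP y).2
  -- F is additive/Leibniz in y
  have Fadd : ∀ y y' : L, F (y + y') = fun x => F y x + F y' x := by
    intro y y'
    refine derivO_unique (K := K) (hF1 _) (isDerivO_add (hF1 y) (hF1 y')) fun r => ?_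
    rw [hF2, hF2, hF2, (hE1 r).1]
  have Fmul : ∀ y y' : L, F (y * y') = fun x => y * F y' x + y' * F y x := by
    intro y y'
    refine derivO_unique (K := K) (hF1 _) (isDerivO_comb _ _ (hF1 y') (hF1 y)) fun r => ?_
    rw [hF2, hF2, hF2, (hE1 r).2]
  -- the biderivation
  have hbider : IsBiderivO (fun x y : L => F y x) := by
    constructor
    · intro r
      exact ⟨fun x y => by dsimp only; rw [Fadd],
             fun x y => by dsimp only; rw [Fmul]⟩
    · intro s
      exact hF1 s
  refine ⟨fun x y => F y x, ⟨hbider, fun x y => by dsimp only; rw [hF2, hE2]⟩, ?_⟩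
  rintro b'' ⟨hb''bider, hb''ext⟩
  -- uniqueness
  have step1 : ∀ y : K, (fun x => b'' x (σ y)) = fun x => F (σ y) x := by
    intro y
    refine derivO_unique (K := K) (hb''bider.2 (σ y)) (hF1 (σ y)) fun x => ?_
    rw [hb''ext, hF2, hE2]
  have step2 : ∀ x : L, b'' x = fun y => F y x := by
    intro x
    refine derivO_unique (K := K) (hb''bider.1 x) ?_ fun y => ?_
    · exact ⟨fun y y' => by dsimp only; rw [Fadd], fun y y' => by dsimp only; rw [Fmul]⟩
    · exact congrFun (step1 y) x
  funext x y
  rw [step2 x]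
end

section
/- Unique compatible base extension to the algebraic closure: Let k be a field of characteristic zero with a biderivation b_k, and let R be a finitely generated k-algebra which is an integral domain, with a biderivation b_R such that the structure map k → R is bidifferential. Then there exists a unique biderivation b' on R ⊗_k k̄, where k̄ is an algebraic closure of k, such that the map r ↦ r⊗1 : R → R ⊗_k k̄ is bidifferential (b'(r⊗1, r'⊗1) = b_R(r,r')⊗1). Moreover, for this b': the map c ↦ 1⊗c : k̄ → R ⊗_k k̄ carries the unique biderivation on k̄ extending b_k, i.e., the restriction of b' to 1⊗k̄ takes values in 1⊗k̄ and extends b_k on k; and r ↦ r⊗1 is lifting: for every bidifferential ideal I of (R, b_R), the extended ideal I·(R ⊗_k k̄) is a bidifferential ideal of (R ⊗_k k̄, b'). -/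
set_option synthInstance.maxHeartbeats 1000000
set_option maxHeartbeats 1000000

open TensorProduct

/-- An ideal `I` is a bidifferential ideal of `(R, b)` if `b(I × R) ⊆ I` and `b(R × I) ⊆ I`. -/
def IsBidiffIdeal {R : Type*} [CommRing R] (b : R → R → R) (I : Ideal R) : Prop :=
  ∀ a ∈ I, ∀ x : R, b a x ∈ I ∧ b x a ∈ I

/-!
Characteristic zero makes `k̄/k` separable, so `k → k̄` is formally étale, and so is its base
change `R → R ⊗[k] k̄`. Along a formally étale map `A → B` every derivation `A → B` extends to a
derivation of `B` (formal smoothness: lift `id_B` into the square-zero extension `B[ε]`), and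
uniquely (formal unramifiedness: `Ω[B⁄A] = 0`). Extending a biderivation one argument at a time,
uniqueness shows that the result is again a derivation in the other argument. Uniqueness, now
for derivations with values in `R ⊗[k] k̄` along `k̄ → R ⊗[k] k̄`, resp. in the quotient
`(R ⊗[k] k̄) ⧸ I (R ⊗[k] k̄)`, also gives the compatibility with the extension to `k̄` and the
lifting property.
-/

/-- `D` is a derivation `B → T`, where `T` is a `B`-module through `ψ`. -/
def IsDerivAlong {B T : Type*} [CommRing B] [CommRing T] (ψ : B →+* T) (D : B → T) : Prop :=
  (∀ x y, D (x + y) = D x + D y) ∧ ∀ x y, D (x * y) = ψ x * D y + ψ y * D x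

def IsBiderivAlong {B T : Type*} [CommRing B] [CommRing T] (ψ : B →+* T) (β : B → B → T) :
    Prop :=
  (∀ x, IsDerivAlong ψ (β x)) ∧ ∀ y, IsDerivAlong ψ (fun x => β x y)

theorem isBiderivAlong_id_iff {B : Type*} [CommRing B] {b : B → B → B} :
    IsBiderivAlong (RingHom.id B) b ↔ IsBiderivO b :=
  Iff.rfl

namespace IsDerivAlong

variable {A B C T T' : Type*} [CommRing A] [CommRing B] [CommRing C] [CommRing T] [CommRing T']
  {ψ : B →+* T} {D D₁ D₂ : B → T}

theorem map_zero (hD : IsDerivAlong ψ D) : D 0 = 0 := by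
  simpa using hD.1 0 0

theorem map_one (hD : IsDerivAlong ψ D) : D 1 = 0 := by
  simpa using hD.2 1 1

theorem comp_left (hD : IsDerivAlong ψ D) (g : T →+* T') : IsDerivAlong (g.comp ψ) (g ∘ D) :=
  ⟨fun x y => by simp [hD.1], fun x y => by simp [hD.2]⟩

theorem comp_right (hD : IsDerivAlong ψ D) (f : C →+* B) : IsDerivAlong (ψ.comp f) (D ∘ f) :=
  ⟨fun x y => by simp [hD.1], fun x y => by simp [hD.2]⟩

theorem add (h₁ : IsDerivAlong ψ D₁) (h₂ : IsDerivAlong ψ D₂) :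
    IsDerivAlong ψ (fun x => D₁ x + D₂ x) :=
  ⟨fun x y => by simp only [h₁.1, h₂.1]; ring, fun x y => by simp only [h₁.2, h₂.2]; ring⟩

theorem sub (h₁ : IsDerivAlong ψ D₁) (h₂ : IsDerivAlong ψ D₂) :
    IsDerivAlong ψ (fun x => D₁ x - D₂ x) :=
  ⟨fun x y => by simp only [h₁.1, h₂.1]; ring, fun x y => by simp only [h₁.2, h₂.2]; ring⟩

theorem const_mul (hD : IsDerivAlong ψ D) (c : T) : IsDerivAlong ψ (fun x => c * D x) :=
  ⟨fun x y => by simp only [hD.1]; ring, fun x y => by simp only [hD.2]; ring⟩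

theorem mapsTo_span {D : B → B} (hD : IsDerivAlong (RingHom.id B) D) {S : Set B}
    (hS : Set.MapsTo D S (Ideal.span S)) : Set.MapsTo D (Ideal.span S) (Ideal.span S) := by
  intro x hx
  induction hx using Submodule.span_induction with
  | mem x hx => exact hS hx
  | zero => simp [hD.map_zero]
  | add x y _ _ hx hy => simpa [hD.1] using add_mem hx hy
  | smul a x hx hDx =>
    rw [smul_eq_mul, hD.2]
    exact add_mem (Ideal.mul_mem_left _ a hDx) (Ideal.mul_mem_right _ _ hx)

variable [Algebra A B]

theorem eq_zero_of_formallyUnramified [Algebra.FormallyUnramified A B] (hD : IsDerivAlong ψ D)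
    (h : ∀ a, D (algebraMap A B a) = 0) : D = 0 := by
  let _ := ψ.toAlgebra
  let _ : Algebra A T := (ψ.comp (algebraMap A B)).toAlgebra
  have : IsScalarTower A B T := IsScalarTower.of_algebraMap_eq fun _ => rfl
  let D' : Derivation A B T := Derivation.mk'
    { toFun := D
      map_add' := hD.1
      map_smul' := fun a x => by
        rw [Algebra.smul_def, hD.2, h, mul_zero, add_zero]
        rfl }
    (fun x y => hD.2 x y)
  have : Subsingleton (Derivation A B T) :=
    (KaehlerDifferential.linearMapEquivDerivation A B).symm.injective.subsingleton
  have : D' = 0 := Subsingleton.elim _ _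
  exact funext fun x => congrArg (fun E : Derivation A B T => E x) this

theorem ext_of_formallyUnramified [Algebra.FormallyUnramified A B] (h₁ : IsDerivAlong ψ D₁)
    (h₂ : IsDerivAlong ψ D₂) (h : ∀ a, D₁ (algebraMap A B a) = D₂ (algebraMap A B a)) :
    D₁ = D₂ := by
  have := (h₁.sub h₂).eq_zero_of_formallyUnramified fun a => sub_eq_zero.mpr (h a)
  exact funext fun x => sub_eq_zero.mp (congrFun this x)

theorem mem_of_forall_algebraMap_mem [Algebra.FormallyUnramified A B] {D : B → B}
    (hD : IsDerivAlong (RingHom.id B) D) {J : Ideal B} (h : ∀ a, D (algebraMap A B a) ∈ J)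
    (x : B) : D x ∈ J := by
  have := (hD.comp_left (Ideal.Quotient.mk J)).eq_zero_of_formallyUnramified
    fun a => Ideal.Quotient.eq_zero_iff_mem.mpr (h a)
  exact Ideal.Quotient.eq_zero_iff_mem.mp (congrFun this x)

open TrivSqZeroExt in
theorem exists_extension_of_formallySmooth [Algebra.FormallySmooth A B] {d : A → B}
    (hd : IsDerivAlong (algebraMap A B) d) :
    ∃ D : B → B, IsDerivAlong (RingHom.id B) D ∧ ∀ a, D (algebraMap A B a) = d a := by
  -- `a ↦ a + (d a)ε` makes `B[ε]` an `A`-algebra, whose `A`-sections of `fst` are the maps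
  -- `b ↦ b + (D b)ε` with `D` a derivation extending `d`.
  let f : A →+* TrivSqZeroExt B B :=
    { toFun a := inl (algebraMap A B a) + inr (d a)
      map_one' := by ext <;> simp [hd.map_one]
      map_mul' x y := by ext <;> simp [hd.2, mul_comm]
      map_zero' := by ext <;> simp [hd.map_zero]
      map_add' x y := by ext <;> simp [hd.1] }
  let _ := f.toAlgebra
  let π : TrivSqZeroExt B B →ₐ[A] B :=
    { fstHom B B B with commutes' a := by simp [f, RingHom.algebraMap_toAlgebra] }
  let L := Algebra.FormallySmooth.liftOfSurjective (AlgHom.id A B) π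
    (fun b => ⟨inl b, fst_inl B b⟩) ⟨2, kerIdeal_sq B B⟩
  have hL : ∀ b, (L b).fst = b := Algebra.FormallySmooth.liftOfSurjective_apply _ π _ _
  refine ⟨fun b => (L b).snd, ⟨fun x y => by simp, fun x y => ?_⟩, fun a => ?_⟩
  · simp [hL, mul_comm]
  · simp [L.commutes, RingHom.algebraMap_toAlgebra, f]

end IsDerivAlong

namespace IsBiderivAlong

variable {A B C T T' : Type*} [CommRing A] [CommRing B] [CommRing C] [CommRing T] [CommRing T']
  {ψ : B →+* T} {β β₁ β₂ : B → B → T}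

theorem comp_left (hβ : IsBiderivAlong ψ β) (g : T →+* T') :
    IsBiderivAlong (g.comp ψ) (fun x y => g (β x y)) :=
  ⟨fun x => (hβ.1 x).comp_left g, fun y => (hβ.2 y).comp_left g⟩

theorem comp_right (hβ : IsBiderivAlong ψ β) (f : C →+* B) :
    IsBiderivAlong (ψ.comp f) (fun x y => β (f x) (f y)) :=
  ⟨fun x => (hβ.1 (f x)).comp_right f, fun y => (hβ.2 (f y)).comp_right f⟩

variable [Algebra A B]

theorem ext_of_formallyUnramified [Algebra.FormallyUnramified A B] (h₁ : IsBiderivAlong ψ β₁)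
    (h₂ : IsBiderivAlong ψ β₂)
    (h : ∀ a a', β₁ (algebraMap A B a) (algebraMap A B a') =
      β₂ (algebraMap A B a) (algebraMap A B a')) :
    β₁ = β₂ := by
  have h_left : ∀ a, β₁ (algebraMap A B a) = β₂ (algebraMap A B a) := fun a =>
    (h₁.1 _).ext_of_formallyUnramified (h₂.1 _) (h a)
  funext x y
  exact congrFun ((h₁.2 y).ext_of_formallyUnramified (h₂.2 y) fun a => congrFun (h_left a) y) x

end IsBiderivAlong

section Extension

variable {A B P : Type*} [CommRing A] [CommRing B] [CommRing P] [Algebra A B]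

theorem isDerivAlong_apply_of_formallyUnramified [Algebra.FormallyUnramified A B]
    (ψ : P →+* B) {F : P → B → B} (hF : ∀ p, IsDerivAlong (RingHom.id B) (F p))
    (hA : ∀ a, IsDerivAlong ψ (fun p => F p (algebraMap A B a))) (y : B) :
    IsDerivAlong ψ (fun p => F p y) := by
  constructor
  · intro p q
    exact congrFun ((hF (p + q)).ext_of_formallyUnramified ((hF p).add (hF q))
      fun a => (hA a).1 p q) y
  · intro p q
    exact congrFun ((hF (p * q)).ext_of_formallyUnramified
      (((hF q).const_mul (ψ p)).add ((hF p).const_mul (ψ q))) fun a => (hA a).2 p q) y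

theorem IsBiderivO.exists_extension_of_formallyEtale [Algebra.FormallyEtale A B] {b : A → A → A}
    (hb : IsBiderivO b) :
    ∃ b' : B → B → B, IsBiderivO b' ∧
      ∀ a a', b' (algebraMap A B a) (algebraMap A B a') = algebraMap A B (b a a') := by
  rw [← isBiderivAlong_id_iff] at hb
  choose d hd hd_alg using fun a =>
    ((hb.1 a).comp_left (algebraMap A B)).exists_extension_of_formallySmooth (B := B)
  have hd_left := isDerivAlong_apply_of_formallyUnramified (A := A) (algebraMap A B) hd
    fun a' => by
      simpa only [hd_alg, RingHom.comp_id, Function.comp_def] using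
        (hb.2 a').comp_left (algebraMap A B)
  choose E hE hE_alg using fun y => (hd_left y).exists_extension_of_formallySmooth
  have hE_right := isDerivAlong_apply_of_formallyUnramified (A := A) (RingHom.id B) hE
    fun a => by simpa only [hE_alg] using hd a
  exact ⟨fun x y => E y x, isBiderivAlong_id_iff.mp ⟨hE_right, hE⟩,
    fun a a' => by simp only [hE_alg, hd_alg, Function.comp_apply]⟩

theorem IsBidiffIdeal.map_of_formallyUnramified [Algebra.FormallyUnramified A B]
    {b : A → A → A} {b' : B → B → B} (hb' : IsBiderivO b')
    (hcomp : ∀ a a', b' (algebraMap A B a) (algebraMap A B a') = algebraMap A B (b a a'))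
    {I : Ideal A} (hI : IsBidiffIdeal b I) : IsBidiffIdeal b' (I.map (algebraMap A B)) := by
  rw [← isBiderivAlong_id_iff] at hb'
  have h_left :
      ∀ y, Set.MapsTo (fun x => b' x y) (algebraMap A B '' I) (I.map (algebraMap A B)) := by
    rintro y _ ⟨i, hi, rfl⟩
    exact IsDerivAlong.mem_of_forall_algebraMap_mem (hb'.1 _)
      (fun a => hcomp i a ▸ Ideal.mem_map_of_mem _ (hI i hi a).1) y
  have h_right : ∀ x, Set.MapsTo (b' x) (algebraMap A B '' I) (I.map (algebraMap A B)) := by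
    rintro x _ ⟨i, hi, rfl⟩
    exact IsDerivAlong.mem_of_forall_algebraMap_mem (hb'.2 _)
      (fun a => hcomp a i ▸ Ideal.mem_map_of_mem _ (hI i hi a).2) x
  exact fun a ha x => ⟨IsDerivAlong.mapsTo_span (hb'.2 x) (h_left x) ha,
    IsDerivAlong.mapsTo_span (hb'.1 x) (h_right x) ha⟩

end Extension

theorem biderivation_base_extension_algebraicClosure_general
    {k R : Type*} [Field k] [CharZero k]
    [CommRing R] [Algebra k R]
    (bk : k → k → k) (hbk : IsBiderivO bk)
    (bR : R → R → R) (hbR : IsBiderivO bR)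
    (hext : ∀ c c' : k, bR (algebraMap k R c) (algebraMap k R c') = algebraMap k R (bk c c')) :
    ∃ b' : R ⊗[k] AlgebraicClosure k → R ⊗[k] AlgebraicClosure k → R ⊗[k] AlgebraicClosure k,
      (IsBiderivO b' ∧ ∀ r r' : R, b' (r ⊗ₜ 1) (r' ⊗ₜ 1) = bR r r' ⊗ₜ 1) ∧
      (∀ b'' : R ⊗[k] AlgebraicClosure k → R ⊗[k] AlgebraicClosure k → R ⊗[k] AlgebraicClosure k,
        (IsBiderivO b'' ∧ ∀ r r' : R, b'' (r ⊗ₜ 1) (r' ⊗ₜ 1) = bR r r' ⊗ₜ 1) → b'' = b') ∧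
      (∃ bkbar : AlgebraicClosure k → AlgebraicClosure k → AlgebraicClosure k,
        IsBiderivO bkbar ∧
        (∀ c c' : k,
          bkbar (algebraMap k (AlgebraicClosure k) c) (algebraMap k (AlgebraicClosure k) c')
            = algebraMap k (AlgebraicClosure k) (bk c c')) ∧
        (∀ c c' : AlgebraicClosure k,
          b' ((1:R) ⊗ₜ c) ((1:R) ⊗ₜ c') = (1:R) ⊗ₜ bkbar c c')) ∧
      (∀ I : Ideal R, IsBidiffIdeal bR I →
        IsBidiffIdeal b' (Ideal.map (Algebra.TensorProduct.includeLeftRingHom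
          (R := k) (A := R) (B := AlgebraicClosure k)) I)) := by
  have : Algebra.FormallyEtale k (AlgebraicClosure k) := .of_isSeparable k _
  obtain ⟨b', hb', hb'_alg⟩ :=
    hbR.exists_extension_of_formallyEtale (B := R ⊗[k] AlgebraicClosure k)
  obtain ⟨bkbar, hbkbar, hbkbar_alg⟩ :=
    hbk.exists_extension_of_formallyEtale (B := AlgebraicClosure k)
  let ι := (Algebra.TensorProduct.includeRight (R := k) (A := R)
    (B := AlgebraicClosure k)).toRingHom
  have hι : ∀ c : k, ι (algebraMap k _ c) = algebraMap R _ (algebraMap k R c) := fun c => by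
    simp [ι]
  have hb'_bkbar := IsBiderivAlong.ext_of_formallyUnramified (A := k)
    ((isBiderivAlong_id_iff.mpr hb').comp_right ι)
    ((isBiderivAlong_id_iff.mpr hbkbar).comp_left ι)
    fun c c' => by simp only [hι, hb'_alg, hext, hbkbar_alg]
  refine ⟨b', ⟨hb', hb'_alg⟩, fun b'' ⟨hb'', hb''_alg⟩ => ?_, ⟨bkbar, hbkbar, hbkbar_alg,
    fun c c' => congrFun (congrFun hb'_bkbar c) c'⟩,
    fun I hI => hI.map_of_formallyUnramified hb' hb'_alg⟩
  exact IsBiderivAlong.ext_of_formallyUnramified (A := R) (isBiderivAlong_id_iff.mpr hb'')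
    (isBiderivAlong_id_iff.mpr hb') fun r r' => (hb''_alg r r').trans (hb'_alg r r').symm

/-- Unique compatible base extension to the algebraic closure (Proposition 3.4 of
"Commutative bidifferential algebra"). -/
theorem biderivation_base_extension_algebraicClosure
    {k R : Type*} [Field k] [CharZero k]
    [CommRing R] [IsDomain R] [Algebra k R]
    (hfg : Algebra.FiniteType k R)
    (bk : k → k → k) (hbk : IsBiderivO bk)
    (bR : R → R → R) (hbR : IsBiderivO bR)
    (hext : ∀ c c' : k, bR (algebraMap k R c) (algebraMap k R c') = algebraMap k R (bk c c')) :
    ∃ b' : R ⊗[k] AlgebraicClosure k → R ⊗[k] AlgebraicClosure k → R ⊗[k] AlgebraicClosure k,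
      (IsBiderivO b' ∧ ∀ r r' : R, b' (r ⊗ₜ 1) (r' ⊗ₜ 1) = bR r r' ⊗ₜ 1) ∧
      (∀ b'' : R ⊗[k] AlgebraicClosure k → R ⊗[k] AlgebraicClosure k → R ⊗[k] AlgebraicClosure k,
        (IsBiderivO b'' ∧ ∀ r r' : R, b'' (r ⊗ₜ 1) (r' ⊗ₜ 1) = bR r r' ⊗ₜ 1) → b'' = b') ∧
      (∃ bkbar : AlgebraicClosure k → AlgebraicClosure k → AlgebraicClosure k,
        IsBiderivO bkbar ∧
        (∀ c c' : k,
          bkbar (algebraMap k (AlgebraicClosure k) c) (algebraMap k (AlgebraicClosure k) c')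
            = algebraMap k (AlgebraicClosure k) (bk c c')) ∧
        (∀ c c' : AlgebraicClosure k,
          b' ((1:R) ⊗ₜ c) ((1:R) ⊗ₜ c') = (1:R) ⊗ₜ bkbar c c')) ∧
      (∀ I : Ideal R, IsBidiffIdeal bR I →
        IsBidiffIdeal b' (Ideal.map (Algebra.TensorProduct.includeLeftRingHom
          (R := k) (A := R) (B := AlgebraicClosure k)) I)) :=
  biderivation_base_extension_algebraicClosure_general bk hbk bR hbR hext
end

section
/- Prime components of a radical bidifferential ideal are bidifferential: Let R be a commutative ring which is a ℚ-algebra, equipped with a biderivation b. Suppose I is a radical bidifferential ideal of (R,b) and I = P₁ ∩ ⋯ ∩ P_n where each P_i is a prime ideal of R and P_i ⊄ P_j for all i ≠ j. Then each P_i is a bidifferential ideal of (R,b). -/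
/-- Prime components of a radical bidifferential ideal are bidifferential (Lemma 4.2 of
"Commutative bidifferential algebra"), for rings of characteristic zero (ℚ-algebras). -/
theorem prime_components_of_radical_bidiffIdeal
    {R : Type*} [CommRing R] [Algebra ℚ R]
    (b : R → R → R) (hb : IsBiderivO b)
    (I : Ideal R) (hrad : I.IsRadical) (hI : IsBidiffIdeal b I)
    (n : ℕ) (P : Fin n → Ideal R)
    (hprime : ∀ i, (P i).IsPrime)
    (hnotle : ∀ i j, i ≠ j → ¬ P i ≤ P j)
    (hinter : I = ⨅ i, P i) :
    ∀ i, IsBidiffIdeal b (P i) := by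
  intro i
  -- choose, for each j ≠ i, an element of P j not in P i
  have hex : ∀ j : Fin n, j ≠ i → ∃ y, y ∈ P j ∧ y ∉ P i := by
    intro j hj
    have := hnotle j i hj
    rw [SetLike.not_le_iff_exists] at this
    exact this
  classical
  set f : Fin n → R := fun j => if h : j ≠ i then (hex j h).choose else 1 with hf
  set c : R := ∏ j ∈ Finset.univ.erase i, f j with hc
  have hfj : ∀ j : Fin n, j ≠ i → f j ∈ P j ∧ f j ∉ P i := by
    intro j hj
    simp only [hf, dif_pos hj]
    exact (hex j hj).choose_spec
  haveI := hprime i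
  have hcnot : c ∉ P i := by
    rw [hc, Ideal.IsPrime.prod_mem_iff]
    rintro ⟨j, hjmem, hjP⟩
    exact (hfj j (Finset.ne_of_mem_erase hjmem)).2 hjP
  intro a ha x
  have hca : c * a ∈ I := by
    rw [hinter, Ideal.mem_iInf]
    intro j
    by_cases hj : j = i
    · subst hj; exact Ideal.mul_mem_left _ _ ha
    · have : f j ∣ c := Finset.dvd_prod_of_mem f (Finset.mem_erase.mpr ⟨hj, Finset.mem_univ j⟩)
      obtain ⟨d, hd⟩ := this
      rw [hd, mul_assoc]
      exact Ideal.mul_mem_right _ _ (hfj j hj).1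
  have hIP : I ≤ P i := by rw [hinter]; exact iInf_le _ i
  have h1 : b (c * a) x ∈ P i := hIP ((hI _ hca x).1)
  have h2 : b x (c * a) ∈ P i := hIP ((hI _ hca x).2)
  have e1 : b (c * a) x = c * b a x + a * b c x := (hb.2 x).2 c a
  have e2 : b x (c * a) = c * b x a + a * b x c := (hb.1 x).2 c a
  rw [e1] at h1
  rw [e2] at h2
  have ha1 : a * b c x ∈ P i := Ideal.mul_mem_right _ _ ha
  have ha2 : a * b x c ∈ P i := Ideal.mul_mem_right _ _ ha
  have hc1 : c * b a x ∈ P i := by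
    have := Ideal.sub_mem _ h1 ha1; simpa using this
  have hc2 : c * b x a ∈ P i := by
    have := Ideal.sub_mem _ h2 ha2; simpa using this
  constructor
  · rcases (hprime i).mem_or_mem hc1 with h | h
    · exact absurd h hcnot
    · exact h
  · rcases (hprime i).mem_or_mem hc2 with h | h
    · exact absurd h hcnot
    · exact h
end

section
/- B-locally-closed implies B-primitive: Let k be a field of characteristic zero with a biderivation b_k, let R be an affine bidifferential k-algebra with biderivation b extending b_k, and let P be a prime bidifferential ideal of (R,b). If P is B-locally-closed, i.e., P is strictly contained in the intersection of all prime bidifferential ideals Q of (R,b) with P ⊊ Q (with the convention that the empty intersection is R), then P is B-primitive: there exists a maximal ideal m of R with P ⊆ m such that every bidifferential ideal of (R,b) contained in m is contained in P (that is, P is the bidifferential core of m). -/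
section Aux

variable {R : Type*} [CommRing R]

lemma derivO_one {d : R → R} (hd : IsDerivO d) : d 1 = 0 := by
  have h := hd.2 1 1
  simp only [one_mul] at h
  exact (left_eq_add.mp h)

lemma derivO_pow {d : R → R} (hd : IsDerivO d) (a : R) :
    ∀ n : ℕ, d (a ^ n) = (n : R) * a ^ (n - 1) * d a := by
  intro n
  induction n with
  | zero => simp [derivO_one hd]
  | succ n ih =>
    rw [pow_succ, hd.2, ih]
    cases n with
    | zero => simp
    | succ m =>
      have h1 : (m + 1 : ℕ) - 1 = m := by omega
      have h2 : (m + 1 + 1 : ℕ) - 1 = m + 1 := by omega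
      rw [h1, h2]
      push_cast
      ring

lemma ideal_unit_cancel {I : Ideal R} {u x : R} (hu : IsUnit u) (h : u * x ∈ I) : x ∈ I := by
  obtain ⟨v, rfl⟩ := hu
  have := I.mul_mem_left (↑v⁻¹) h
  rwa [← mul_assoc, Units.inv_mul, one_mul] at this

/-- Kaplansky: radical of a differential ideal is differential, over ℚ-like rings. -/
lemma radical_derivO {d : R → R} (hd : IsDerivO d) (I : Ideal R)
    (hI : ∀ a ∈ I, d a ∈ I) (hu : ∀ n : ℕ, 0 < n → IsUnit (n : R)) :
    ∀ a ∈ I.radical, d a ∈ I.radical := by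
  intro a ha
  obtain ⟨n, hn⟩ := Ideal.mem_radical_iff.mp ha
  rcases Nat.eq_zero_or_pos n with rfl | hnpos
  · simp only [pow_zero] at hn
    exact ⟨1, by simpa using I.mul_mem_left (d a) hn⟩
  have key : ∀ j : ℕ, j + 1 ≤ n → a ^ (n - (j + 1)) * d a ^ (2 * j + 1) ∈ I := by
    intro j
    induction j with
    | zero =>
      intro _
      have h2 : d (a ^ n) ∈ I := hI _ hn
      rw [derivO_pow hd] at h2
      rw [mul_assoc] at h2
      have := ideal_unit_cancel (hu n hnpos) h2
      simpa using this
    | succ j ih =>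
      intro hj
      have hprev := ih (by omega)
      obtain ⟨m', hm'⟩ : ∃ m', n - (j + 1) = m' + 1 := ⟨n - (j + 2), by omega⟩
      rw [hm'] at hprev
      have hdt : d (a ^ (m' + 1) * d a ^ (2 * j + 1)) ∈ I := hI _ hprev
      have hsum : ((m' + 1 : ℕ) : R) * (a ^ m' * d a ^ (2 * (j + 1) + 1)) =
          d (a ^ (m' + 1) * d a ^ (2 * j + 1)) * d a
          - ((2 * j + 1 : ℕ) : R) * d (d a) * (a ^ (m' + 1) * d a ^ (2 * j + 1)) := by
        rw [hd.2, derivO_pow hd (d a), derivO_pow hd a]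
        have e1 : (2 * j + 1 : ℕ) - 1 = 2 * j := by omega
        have e2 : (m' + 1 : ℕ) - 1 = m' := by omega
        rw [e1, e2]
        push_cast
        ring
      have hmem : ((m' + 1 : ℕ) : R) * (a ^ m' * d a ^ (2 * (j + 1) + 1)) ∈ I := by
        rw [hsum]
        exact I.sub_mem (I.mul_mem_right _ hdt) (I.mul_mem_left _ hprev)
      have := ideal_unit_cancel (hu (m' + 1) (by omega)) hmem
      have e3 : n - (j + 1 + 1) = m' := by omega
      rwa [e3]
  have := key (n - 1) (by omega)
  have e : n - (n - 1 + 1) = 0 := by omega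
  rw [e, pow_zero, one_mul] at this
  exact ⟨2 * (n - 1) + 1, this⟩

/-- In a radical differential ideal, `x*y ∈ I → d x * y ∈ I`. -/
lemma radical_derivO_mul {d : R → R} (hd : IsDerivO d) (I : Ideal R)
    (hrad : I.radical ≤ I) (hI : ∀ a ∈ I, d a ∈ I) {x y : R} (h : x * y ∈ I) :
    d x * y ∈ I := by
  have h1 : x * d y + y * d x ∈ I := by
    have := hI _ h; rwa [hd.2] at this
  have h2 : (y * d x) * (x * d y + y * d x) ∈ I := I.mul_mem_left _ h1
  have h4 : (x * y) * (d x * d y) ∈ I := I.mul_mem_right _ h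
  have h3 : (y * d x) ^ 2 ∈ I := by
    have he : (y * d x) ^ 2 = (y * d x) * (x * d y + y * d x) - (x * y) * (d x * d y) := by ring
    rw [he]; exact I.sub_mem h2 h4
  have : y * d x ∈ I := hrad ⟨2, h3⟩
  rwa [mul_comm] at this

/-- Minimal primes over a radical differential ideal are differential. -/
lemma minimal_prime_derivO {d : R → R} (hd : IsDerivO d) (I p : Ideal R)
    (hp : p.IsPrime) (hIp : I ≤ p)
    (hmin : ∀ q : Ideal R, q.IsPrime → I ≤ q → q ≤ p → q = p)
    (hrad : I.radical ≤ I) (hI : ∀ a ∈ I, d a ∈ I) {a : R} (ha : a ∈ p) :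
    d a ∈ p := by
  obtain ⟨c, hc, n, hcn⟩ : ∃ c ∉ p, ∃ n : ℕ, c * a ^ n ∈ I := by
    by_contra hcon
    push_neg at hcon
    set S : Submonoid R :=
      { carrier := {x | ∃ c ∉ p, ∃ n : ℕ, x = c * a ^ n}
        one_mem' := ⟨1, fun h1 => hp.ne_top (Ideal.eq_top_iff_one p |>.mpr h1), 0, by simp⟩
        mul_mem' := by
          rintro x y ⟨c, hc, n, rfl⟩ ⟨c', hc', n', rfl⟩
          refine ⟨c * c', fun hcc => ?_, n + n', by ring⟩
          rcases hp.mem_or_mem hcc with h | h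
          · exact hc h
          · exact hc' h } with hS
    have hdisj : Disjoint (I : Set R) (S : Set R) := by
      rw [Set.disjoint_left]
      rintro x hx ⟨c, hc, n, rfl⟩
      exact hcon c hc n hx
    obtain ⟨q, hq, hIq, hqS⟩ := Ideal.exists_le_prime_disjoint I S hdisj
    have hqp : q ≤ p := by
      intro x hx
      by_contra hxp
      exact Set.disjoint_left.mp hqS hx ⟨x, hxp, 0, by simp⟩
    have := hmin q hq hIq hqp
    subst this
    exact Set.disjoint_left.mp hqS ha
      ⟨1, fun h1 => hp.ne_top (Ideal.eq_top_iff_one q |>.mpr h1), 1, by simp⟩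
  have key : ∀ m : ℕ, m ≤ n → d a ^ m * (c * a ^ (n - m)) ∈ I := by
    intro m
    induction m with
    | zero => intro _; simpa using hcn
    | succ m ih =>
      intro hm
      have hprev := ih (by omega)
      obtain ⟨m'', hm''⟩ : ∃ m'', n - m = m'' + 1 := ⟨n - (m + 1), by omega⟩
      rw [hm''] at hprev
      have hre : d a ^ m * (c * a ^ (m'' + 1)) = a * (d a ^ m * c * a ^ m'') := by ring
      rw [hre] at hprev
      have := radical_derivO_mul hd I hrad hI hprev
      have e : n - (m + 1) = m'' := by omega
      rw [e]
      have he2 : d a * (d a ^ m * c * a ^ m'') = d a ^ (m + 1) * (c * a ^ m'') := by ring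
      rwa [he2] at this
  have hfin := key n le_rfl
  rw [Nat.sub_self, pow_zero, mul_one] at hfin
  have hfin' : d a ^ n * c ∈ p := hIp hfin
  rcases hp.mem_or_mem hfin' with h | h
  · cases n with
    | zero => simp only [pow_zero] at h; exact absurd (Ideal.eq_top_iff_one p |>.mpr h) hp.ne_top
    | succ n => exact hp.mem_of_pow_mem _ h
  · exact absurd h hc

end Aux

/-- B-locally-closed implies B-primitive (part of Proposition 4.3 of "Commutative
bidifferential algebra"). Here `R` is an affine bidifferential `k`-algebra: a finitely
generated integral-domain `k`-algebra whose biderivation extends the one on `k`. -/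
theorem bLocallyClosed_implies_bPrimitive
    {k R : Type*} [Field k] [CharZero k]
    [CommRing R] [IsDomain R] [Algebra k R]
    (hfg : Algebra.FiniteType k R)
    (bk : k → k → k) (hbk : IsBiderivO bk)
    (b : R → R → R) (hb : IsBiderivO b)
    (hext : ∀ c c' : k, b (algebraMap k R c) (algebraMap k R c') = algebraMap k R (bk c c'))
    (P : Ideal R) (hP : P.IsPrime) (hPbi : IsBidiffIdeal b P)
    (hlc : P < sInf {Q : Ideal R | Q.IsPrime ∧ IsBidiffIdeal b Q ∧ P < Q}) :
    ∃ m : Ideal R, m.IsMaximal ∧ P ≤ m ∧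
      ∀ I : Ideal R, IsBidiffIdeal b I → I ≤ m → I ≤ P := by
  classical
  -- naturals are units in R
  have hu : ∀ n : ℕ, 0 < n → IsUnit (n : R) := by
    intro n hn
    have h1 : IsUnit ((n : k)) := isUnit_iff_ne_zero.mpr (Nat.cast_ne_zero.mpr hn.ne')
    have h2 := h1.map (algebraMap k R)
    rwa [map_natCast] at h2
  -- R is a Jacobson ring
  haveI : Algebra.FiniteType k R := hfg
  haveI : IsJacobsonRing R := isJacobsonRing_of_finiteType (A := k)
  -- pick f in the intersection of larger bidiff primes, outside P
  obtain ⟨f, hfS, hfP⟩ := SetLike.exists_of_lt hlc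
  -- a maximal ideal over P avoiding f
  have hj : P.jacobson = P := IsJacobsonRing.out ‹IsJacobsonRing R› hP.isRadical
  have hfj : f ∉ P.jacobson := by rw [hj]; exact hfP
  rw [Ideal.jacobson, Ideal.mem_sInf] at hfj
  push_neg at hfj
  obtain ⟨m, ⟨hPm, hmax⟩, hfm⟩ := hfj
  refine ⟨m, hmax, hPm, ?_⟩
  intro I hIbi hIm
  by_contra hIP
  -- J = P + I is bidifferential
  set J : Ideal R := P ⊔ I with hJ
  have hJbi : IsBidiffIdeal b J := by
    intro a haJ x
    rw [Submodule.mem_sup] at haJ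
    obtain ⟨p', hp', i, hi, rfl⟩ := haJ
    constructor
    · have he : b (p' + i) x = b p' x + b i x := (hb.2 x).1 p' i
      rw [he]
      exact Submodule.add_mem _ (Ideal.mem_sup_left (hPbi p' hp' x).1)
        (Ideal.mem_sup_right (hIbi i hi x).1)
    · have he : b x (p' + i) = b x p' + b x i := (hb.1 x).1 p' i
      rw [he]
      exact Submodule.add_mem _ (Ideal.mem_sup_left (hPbi p' hp' x).2)
        (Ideal.mem_sup_right (hIbi i hi x).2)
  -- K = radical of J is bidifferential
  set K : Ideal R := J.radical with hK
  have hKbi : IsBidiffIdeal b K := by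
    intro a ha x
    constructor
    · exact radical_derivO (hb.2 x) J (fun a' ha' => (hJbi a' ha' x).1) hu a ha
    · exact radical_derivO (hb.1 x) J (fun a' ha' => (hJbi a' ha' x).2) hu a ha
  have hJm : J ≤ m := sup_le hPm hIm
  have hKm : K ≤ m := by
    have := Ideal.radical_mono hJm
    rwa [hmax.isPrime.radical] at this
  haveI : m.IsPrime := hmax.isPrime
  obtain ⟨q, hqmin, hqm⟩ := Ideal.exists_minimalPrimes_le hKm
  have hqprime : q.IsPrime := hqmin.1.1
  have hKq : K ≤ q := hqmin.1.2
  have hmin : ∀ q' : Ideal R, q'.IsPrime → K ≤ q' → q' ≤ q → q' = q := by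
    intro q' hq' hKq' hle
    exact le_antisymm hle (hqmin.2 ⟨hq', hKq'⟩ hle)
  have hKrad : K.radical ≤ K := le_of_eq (Ideal.radical_idem J)
  -- q is bidifferential
  have hqbi : IsBidiffIdeal b q := by
    intro a ha x
    constructor
    · exact minimal_prime_derivO (hb.2 x) K q hqprime hKq hmin hKrad
        (fun a' ha' => (hKbi a' ha' x).1) ha
    · exact minimal_prime_derivO (hb.1 x) K q hqprime hKq hmin hKrad
        (fun a' ha' => (hKbi a' ha' x).2) ha
  -- P < q
  have hPq : P < q := by
    refine lt_of_le_of_ne (le_trans le_sup_left (le_trans Ideal.le_radical hKq)) ?_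
    intro h
    exact hIP (fun x hx => h ▸ (le_trans le_sup_right (le_trans Ideal.le_radical hKq)) hx)
  -- contradiction: f ∈ q ≤ m
  have hqS : q ∈ {Q : Ideal R | Q.IsPrime ∧ IsBidiffIdeal b Q ∧ P < Q} :=
    ⟨hqprime, hqbi, hPq⟩
  have hfq : f ∈ q := (sInf_le hqS) hfS
  exact hfm (hqm hfq)
end

section
/- B-primitive implies B-rational: Let k be a field of characteristic zero with a biderivation b_k, let R be an affine bidifferential k-algebra with biderivation b extending b_k, and assume the image of k consists of constants: b(algebraMap(c), r) = 0 = b(r, algebraMap(c)) for all c ∈ k and r ∈ R. Let P be a prime bidifferential ideal of (R,b). If P is B-primitive (there is a maximal ideal m of R with P ⊆ m such that every bidifferential ideal of (R,b) contained in m is contained in P), then P is B-rational: for any biderivation b' on Frac(R/P) extending the biderivation induced by b on the quotient R/P, every element α ∈ Frac(R/P) with b'(α, x) = 0 = b'(x, α) for all x ∈ Frac(R/P) is algebraic over k. -/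
section BiderivAux

variable {A : Type*} [CommRing A] {b : A → A → A}

lemma IsBiderivO.zero_const (hb : IsBiderivO b) (x : A) : b 0 x = 0 ∧ b x 0 = 0 := by
  constructor
  · have h : b (0 + 0) x = b 0 x + b 0 x := (hb.2 x).1 0 0
    rw [add_zero] at h
    exact left_eq_add.mp h
  · have h : b x (0 + 0) = b x 0 + b x 0 := (hb.1 x).1 0 0
    rw [add_zero] at h
    exact left_eq_add.mp h

lemma IsBiderivO.one_const (hb : IsBiderivO b) (x : A) : b 1 x = 0 ∧ b x 1 = 0 := by
  constructor
  · have h : b (1 * 1) x = 1 * b 1 x + 1 * b 1 x := (hb.2 x).2 1 1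
    rw [mul_one, one_mul] at h
    exact left_eq_add.mp h
  · have h : b x (1 * 1) = 1 * b x 1 + 1 * b x 1 := (hb.1 x).2 1 1
    rw [mul_one, one_mul] at h
    exact left_eq_add.mp h

lemma IsBiderivO.add_const (hb : IsBiderivO b) {u v : A}
    (hu : ∀ x, b u x = 0 ∧ b x u = 0) (hv : ∀ x, b v x = 0 ∧ b x v = 0) (x : A) :
    b (u + v) x = 0 ∧ b x (u + v) = 0 := by
  constructor
  · have h : b (u + v) x = b u x + b v x := (hb.2 x).1 u v
    rw [(hu x).1, (hv x).1, add_zero] at h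
    exact h
  · have h : b x (u + v) = b x u + b x v := (hb.1 x).1 u v
    rw [(hu x).2, (hv x).2, add_zero] at h
    exact h

lemma IsBiderivO.mul_const (hb : IsBiderivO b) {u v : A}
    (hu : ∀ x, b u x = 0 ∧ b x u = 0) (hv : ∀ x, b v x = 0 ∧ b x v = 0) (x : A) :
    b (u * v) x = 0 ∧ b x (u * v) = 0 := by
  constructor
  · have h : b (u * v) x = u * b v x + v * b u x := (hb.2 x).2 u v
    rw [(hu x).1, (hv x).1, mul_zero, mul_zero, add_zero] at h
    exact h
  · have h : b x (u * v) = u * b x v + v * b x u := (hb.1 x).2 u v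
    rw [(hu x).2, (hv x).2, mul_zero, mul_zero, add_zero] at h
    exact h

lemma IsBiderivO.pow_const (hb : IsBiderivO b) {u : A}
    (hu : ∀ x, b u x = 0 ∧ b x u = 0) (n : ℕ) : ∀ x : A,
    b (u ^ n) x = 0 ∧ b x (u ^ n) = 0 := by
  induction n with
  | zero => intro x; rw [pow_zero]; exact hb.one_const x
  | succ n ih =>
    intro x
    rw [pow_succ]
    exact hb.mul_const ih hu x

end BiderivAux

lemma IsBiderivO.inv_const {A : Type*} [Field A] {b : A → A → A} (hb : IsBiderivO b) {u : A}
    (hu : ∀ x, b u x = 0 ∧ b x u = 0) (x : A) : b u⁻¹ x = 0 ∧ b x u⁻¹ = 0 := by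
  by_cases h0 : u = 0
  · rw [h0, inv_zero]; exact hb.zero_const x
  constructor
  · have h : b (u * u⁻¹) x = u * b u⁻¹ x + u⁻¹ * b u x := (hb.2 x).2 u u⁻¹
    rw [mul_inv_cancel₀ h0, (hb.one_const x).1, (hu x).1, mul_zero, add_zero] at h
    rcases mul_eq_zero.mp h.symm with h' | h'
    exacts [absurd h' h0, h']
  · have h : b x (u * u⁻¹) = u * b x u⁻¹ + u⁻¹ * b x u := (hb.1 x).2 u u⁻¹
    rw [mul_inv_cancel₀ h0, (hb.one_const x).2, (hu x).2, mul_zero, add_zero] at h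
    rcases mul_eq_zero.mp h.symm with h' | h'
    exacts [absurd h' h0, h']

/-- The composite `R → R/P → Frac(R/P)`. -/
noncomputable def qmap {R : Type*} [CommRing R] (P : Ideal R) :
    R →+* FractionRing (R ⧸ P) :=
  (algebraMap (R ⧸ P) (FractionRing (R ⧸ P))).comp (Ideal.Quotient.mk P)

lemma qmap_apply {R : Type*} [CommRing R] (P : Ideal R) (r : R) :
    qmap P r = algebraMap (R ⧸ P) (FractionRing (R ⧸ P)) (Ideal.Quotient.mk P r) := rfl

/-- B-primitive implies B-rational (part of Proposition 4.3 of "Commutative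
bidifferential algebra"), assuming the image of `k` consists of constants. A biderivation
`b'` on `Frac(R/P)` extends the induced biderivation on `R/P` exactly when the composite
`R → R/P → Frac(R/P)` is bidifferential. -/
theorem bPrimitive_implies_bRational
    {k R : Type*} [Field k] [CharZero k]
    [CommRing R] [IsDomain R] [Algebra k R]
    (hfg : Algebra.FiniteType k R)
    (bk : k → k → k) (hbk : IsBiderivO bk)
    (b : R → R → R) (hb : IsBiderivO b)
    (hext : ∀ c c' : k, b (algebraMap k R c) (algebraMap k R c') = algebraMap k R (bk c c'))
    (hconst : ∀ (c : k) (r : R), b (algebraMap k R c) r = 0 ∧ b r (algebraMap k R c) = 0)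
    (P : Ideal R) (hP : P.IsPrime) (hPbi : IsBidiffIdeal b P)
    (hprim : ∃ m : Ideal R, m.IsMaximal ∧ P ≤ m ∧
      ∀ I : Ideal R, IsBidiffIdeal b I → I ≤ m → I ≤ P) :
    ∀ b' : FractionRing (R ⧸ P) → FractionRing (R ⧸ P) → FractionRing (R ⧸ P),
      IsBiderivO b' →
      (∀ x y : R,
        b' (algebraMap (R ⧸ P) (FractionRing (R ⧸ P)) (Ideal.Quotient.mk P x))
            (algebraMap (R ⧸ P) (FractionRing (R ⧸ P)) (Ideal.Quotient.mk P y))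
          = algebraMap (R ⧸ P) (FractionRing (R ⧸ P)) (Ideal.Quotient.mk P (b x y))) →
      ∀ α : FractionRing (R ⧸ P),
        (∀ x : FractionRing (R ⧸ P), b' α x = 0 ∧ b' x α = 0) →
        IsAlgebraic k α := by
  classical
  intro b' hb' hcomp α hα
  haveI := hP
  by_contra halg
  obtain ⟨m, hm, hPm, hmax⟩ := hprim
  haveI := hm
  letI : Field (R ⧸ m) := Ideal.Quotient.field m
  -- basic facts about qmap
  have hcomp' : ∀ x y : R, b' (qmap P x) (qmap P y) = qmap P (b x y) := hcomp
  have hker : ∀ r : R, qmap P r = 0 ↔ r ∈ P := by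
    intro r
    rw [qmap_apply, IsFractionRing.to_map_eq_zero_iff, Ideal.Quotient.eq_zero_iff_mem]
  have surjL : ∀ x : FractionRing (R ⧸ P), ∃ s t : R, t ∉ P ∧ x * qmap P t = qmap P s := by
    intro x
    obtain ⟨⟨s0, t0⟩, h0⟩ := IsLocalization.surj (nonZeroDivisors (R ⧸ P)) x
    obtain ⟨s, hs⟩ := Ideal.Quotient.mk_surjective s0
    obtain ⟨t, ht⟩ := Ideal.Quotient.mk_surjective (t0 : R ⧸ P)
    refine ⟨s, t, ?_, ?_⟩
    · rw [← Ideal.Quotient.eq_zero_iff_mem, ht]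
      exact nonZeroDivisors.ne_zero t0.2
    · rw [qmap_apply, qmap_apply, hs, ht]
      exact h0
  have hkmap : ∀ c : k, qmap P (algebraMap k R c) = algebraMap k (FractionRing (R ⧸ P)) c := by
    intro c
    rw [IsScalarTower.algebraMap_apply k (R ⧸ P) (FractionRing (R ⧸ P)),
      IsScalarTower.algebraMap_apply k R (R ⧸ P), Ideal.Quotient.algebraMap_eq]
    rfl
  -- detection of constants: constant on the image of R implies constant
  have detect : ∀ u : FractionRing (R ⧸ P),
      (∀ r : R, b' u (qmap P r) = 0 ∧ b' (qmap P r) u = 0) →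
      ∀ x, b' u x = 0 ∧ b' x u = 0 := by
    intro u hu x
    obtain ⟨s, t, htP, hx⟩ := surjL x
    have htne : qmap P t ≠ 0 := fun h => htP ((hker t).mp h)
    constructor
    · have h1 : b' u (x * qmap P t) = x * b' u (qmap P t) + qmap P t * b' u x :=
        (hb'.1 u).2 x (qmap P t)
      rw [hx, (hu s).1, (hu t).1, mul_zero, zero_add] at h1
      rcases mul_eq_zero.mp h1.symm with h | h
      exacts [absurd h htne, h]
    · have h1 : b' (x * qmap P t) u = x * b' (qmap P t) u + qmap P t * b' x u :=
        (hb'.2 u).2 x (qmap P t)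
      rw [hx, (hu s).2, (hu t).2, mul_zero, zero_add] at h1
      rcases mul_eq_zero.mp h1.symm with h | h
      exacts [absurd h htne, h]
  -- the image of k consists of constants
  have hkconst : ∀ c : k, ∀ x, b' (algebraMap k (FractionRing (R ⧸ P)) c) x = 0 ∧
      b' x (algebraMap k (FractionRing (R ⧸ P)) c) = 0 := by
    intro c
    rw [← hkmap c]
    apply detect
    intro r
    constructor
    · rw [hcomp' _ r, (hconst c r).1, map_zero]
    · rw [hcomp' r _, (hconst c r).2, map_zero]
  -- polynomial evaluations at α are constants
  have haev : ∀ p : Polynomial k, ∀ x,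
      b' (Polynomial.aeval α p) x = 0 ∧ b' x (Polynomial.aeval α p) = 0 := by
    intro p
    induction p using Polynomial.induction_on' with
    | add p q hp hq =>
      intro x
      rw [map_add]
      exact hb'.add_const hp hq x
    | monomial n a =>
      intro x
      rw [Polynomial.aeval_monomial]
      exact hb'.mul_const (hkconst a) (hb'.pow_const hα n) x
  -- denominator ideals of constants avoid m
  have key : ∀ u : FractionRing (R ⧸ P), (∀ x, b' u x = 0 ∧ b' x u = 0) →
      ∃ t s : R, t ∉ m ∧ qmap P t * u = qmap P s := by
    intro u hu
    let J : Ideal R :=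
      { carrier := {r | ∃ s, qmap P r * u = qmap P s}
        add_mem' := by
          rintro a c ⟨s1, h1⟩ ⟨s2, h2⟩
          exact ⟨s1 + s2, by rw [map_add, add_mul, h1, h2, map_add]⟩
        zero_mem' := ⟨0, by simp⟩
        smul_mem' := by
          rintro c a ⟨s, h⟩
          exact ⟨c * s, by rw [smul_eq_mul, map_mul, mul_assoc, h, map_mul]⟩ }
    have hJ : IsBidiffIdeal b J := by
      rintro r ⟨s, hs⟩ x
      constructor
      · have h1 : b' (qmap P r * u) (qmap P x) =
            qmap P r * b' u (qmap P x) + u * b' (qmap P r) (qmap P x) :=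
          (hb'.2 (qmap P x)).2 (qmap P r) u
        rw [hs, (hu (qmap P x)).1, mul_zero, zero_add, hcomp' s x, hcomp' r x] at h1
        exact ⟨b s x, by rw [mul_comm]; exact h1.symm⟩
      · have h1 : b' (qmap P x) (qmap P r * u) =
            qmap P r * b' (qmap P x) u + u * b' (qmap P x) (qmap P r) :=
          (hb'.1 (qmap P x)).2 (qmap P r) u
        rw [hs, (hu (qmap P x)).2, mul_zero, zero_add, hcomp' x s, hcomp' x r] at h1
        exact ⟨b x s, by rw [mul_comm]; exact h1.symm⟩
    obtain ⟨s0, t0, ht0P, h0⟩ := surjL u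
    have ht0J : t0 ∈ J := ⟨s0, by rw [mul_comm]; exact h0⟩
    have hnle : ¬ J ≤ m := fun hle => ht0P (hmax J hJ hle ht0J)
    obtain ⟨t, htJ, htm⟩ := SetLike.not_le_iff_exists.mp hnle
    obtain ⟨s, hs⟩ := htJ
    exact ⟨t, s, htm, hs⟩
  -- α is locally in R at m
  obtain ⟨tα, sα, htαm, heqα⟩ := key α hα
  -- R/m is algebraic over k (Zariski's lemma)
  have halgF : Algebra.IsAlgebraic k (R ⧸ m) := by
    have h1 : Algebra.FiniteType k (R ⧸ m) :=
      @Algebra.FiniteType.of_surjective _ _ _ _ _ _ _ _ hfg (Ideal.Quotient.mkₐ k m)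
        (Ideal.Quotient.mkₐ_surjective k m)
    have : Module.Finite k (R ⧸ m) := finite_of_finite_type_of_isJacobsonRing k _
    exact Algebra.IsAlgebraic.of_finite k _
  have htα0 : Ideal.Quotient.mk m tα ≠ 0 := by
    rw [Ne, Ideal.Quotient.eq_zero_iff_mem]; exact htαm
  set abar : R ⧸ m := Ideal.Quotient.mk m sα * (Ideal.Quotient.mk m tα)⁻¹ with habar
  obtain ⟨p, hp0, hpev⟩ := halgF.isAlgebraic abar
  have hpα : Polynomial.aeval α p ≠ 0 := fun h => halg ⟨p, hp0, h⟩
  obtain ⟨tp, sp, htpm, heqβ⟩ := key (Polynomial.aeval α p)⁻¹ (hb'.inv_const (haev p))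
  have htp0 : Ideal.Quotient.mk m tp ≠ 0 := by
    rw [Ne, Ideal.Quotient.eq_zero_iff_mem]; exact htpm
  have heqβ' : qmap P tp = qmap P sp * Polynomial.aeval α p := by
    have h := congrArg (· * Polynomial.aeval α p) heqβ
    simp only [mul_assoc, inv_mul_cancel₀ hpα, mul_one] at h
    exact h
  set n := p.natDegree with hn
  set q : R := ∑ i ∈ Finset.range (n + 1),
      algebraMap k R (p.coeff i) * sα ^ i * tα ^ (n - i) with hqdef
  have hq : qmap P q = qmap P tα ^ n * Polynomial.aeval α p := by
    rw [Polynomial.aeval_eq_sum_range, Finset.mul_sum, hqdef, map_sum]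
    refine Finset.sum_congr rfl ?_
    intro i hi
    have hi' : i ≤ n := Nat.lt_succ_iff.mp (Finset.mem_range.mp hi)
    rw [map_mul, map_mul, map_pow, map_pow, hkmap, Algebra.smul_def, ← heqα, mul_pow,
      ← pow_mul_pow_sub (qmap P tα) hi']
    ring
  have hmain : qmap P (q * sp) = qmap P (tα ^ n * tp) := by
    rw [map_mul, map_mul, map_pow, hq, mul_assoc,
      mul_comm (Polynomial.aeval α p) (qmap P sp), ← heqβ']
  have hmm : Ideal.Quotient.mk m (q * sp) = Ideal.Quotient.mk m (tα ^ n * tp) := by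
    rw [← sub_eq_zero, ← map_sub, Ideal.Quotient.eq_zero_iff_mem]
    refine hPm ?_
    have h0 : qmap P (q * sp - tα ^ n * tp) = 0 := by rw [map_sub, hmain, sub_self]
    exact (hker _).mp h0
  have hne : Ideal.Quotient.mk m (tα ^ n * tp) ≠ 0 := by
    rw [map_mul, map_pow]
    exact mul_ne_zero (pow_ne_zero _ htα0) htp0
  -- but the image of q in R/m vanishes
  have hπq : Ideal.Quotient.mk m q = 0 := by
    have hqbar : Ideal.Quotient.mk m q =
        (Ideal.Quotient.mk m tα) ^ n * Polynomial.aeval abar p := by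
      rw [Polynomial.aeval_eq_sum_range, Finset.mul_sum, hqdef, map_sum, ← hn]
      refine Finset.sum_congr rfl ?_
      intro i hi
      have hi' : i ≤ n := Nat.lt_succ_iff.mp (Finset.mem_range.mp hi)
      have hmapc : Ideal.Quotient.mk m (algebraMap k R (p.coeff i)) =
          algebraMap k (R ⧸ m) (p.coeff i) := by
        rw [IsScalarTower.algebraMap_apply k R (R ⧸ m), Ideal.Quotient.algebraMap_eq]
      rw [map_mul, map_mul, map_pow, map_pow, hmapc, Algebra.smul_def, habar, mul_pow,
        inv_pow, pow_sub₀ _ htα0 hi']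
      ring
    rw [hqbar, hpev, mul_zero]
  rw [map_mul, hπq, zero_mul] at hmm
  exact hne hmm.symm
end

section
/- Extension of derivations to monogenic integral extensions: Let A → B be an injective ring homomorphism of integral domains, let b ∈ B, and let P be a monic polynomial with coefficients in A of minimal degree among nonzero polynomials over A vanishing at b (this corresponds to the minimal polynomial of b over Frac(A) having coefficients in A). Let S be a B-algebra and let d : A → S be a derivation (an additive map satisfying d(xy) = x·d(y) + y·d(x), with S regarded as an A-module via A → B → S). Set f := P'(b) ∈ B, where P' is the formal derivative of P. Then d extends uniquely to a derivation d' : A[b] → S_f, where A[b] := Algebra.adjoin A {b} and S_f is the localization of S away from the image of f; here extension means d'(algebraMap(a)) equals the image of d(a) in S_f for all a ∈ A, and d' is a derivation with respect to the A[b]-module structure on S_f. -/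
/-- A derivation on a commutative ring `T` with values in a commutative ring `M`,
where `M` is regarded as a `T`-module via the ring homomorphism `ρ : T →+* M`. -/
def IsDerivationVia {T M : Type*} [CommRing T] [CommRing M] (ρ : T →+* M) (d : T → M) : Prop :=
  (∀ x y : T, d (x + y) = d x + d y) ∧ (∀ x y : T, d (x * y) = ρ x * d y + ρ y * d x)

/-!
A derivation `T → M` along `ρ` is the same as a ring homomorphism `T → M[ε] = TrivSqZeroExt M M`
lifting `ρ`. Since `P` divides every polynomial vanishing at `b`, `A[b] ≅ A[X]/(P)`, so a
homomorphism `A[b] → M[ε]` extending the given one on `A` is determined by the image `ρ b + θε`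
of `b`, subject only to `P(ρ b + θε) = 0`. By Taylor expansion this reads `P^d(b) + P'(b) θ = 0`,
where `P^d` is `P` with `d` applied to its coefficients, and it has exactly one solution once
`P'(b)` is inverted.
-/

open Polynomial TrivSqZeroExt

namespace IsDerivationVia

variable {T M : Type*} [CommRing T] [CommRing M] {ρ : T →+* M} {D : T → M}

theorem map_zero_eq_zero (h : IsDerivationVia ρ D) : D 0 = 0 := by
  simpa using h.1 0 0

theorem map_one_eq_zero (h : IsDerivationVia ρ D) : D 1 = 0 := by
  simpa using h.2 1 1

def toRingHom (h : IsDerivationVia ρ D) : T →+* TrivSqZeroExt M M where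
  toFun x := inl (ρ x) + inr (D x)
  map_one' := by simp [h.map_one_eq_zero]
  map_mul' x y := by ext <;> simp [h.2 x y, mul_comm, add_comm]
  map_zero' := by simp [h.map_zero_eq_zero]
  map_add' x y := by ext <;> simp [h.1 x y]

@[simp] theorem fst_toRingHom (h : IsDerivationVia ρ D) (x : T) : (h.toRingHom x).fst = ρ x := by
  simp [toRingHom]

@[simp] theorem snd_toRingHom (h : IsDerivationVia ρ D) (x : T) : (h.toRingHom x).snd = D x := by
  simp [toRingHom]

theorem of_ringHom (φ : T →+* TrivSqZeroExt M M) (hφ : ∀ x, (φ x).fst = ρ x) :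
    IsDerivationVia ρ fun x => (φ x).snd := by
  refine ⟨fun x y => by simp, fun x y => ?_⟩
  simp [hφ, mul_comm, add_comm]

theorem map {N : Type*} [CommRing N] (h : IsDerivationVia ρ D) (g : M →+* N) :
    IsDerivationVia (g.comp ρ) (g ∘ D) :=
  ⟨fun x y => by simp [h.1 x y], fun x y => by simp [h.2 x y]⟩

end IsDerivationVia

theorem TrivSqZeroExt.eval₂_add_inr {A M : Type*} [CommRing A] [CommRing M]
    (H : A →+* TrivSqZeroExt M M) (Q : A[X]) (x : TrivSqZeroExt M M) (t : M) :
    Q.eval₂ H (x + inr t) = Q.eval₂ H x + inr ((Q.derivative.eval₂ H x).fst * t) := by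
  rw [← eval_map, eval_add_of_sq_eq_zero _ _ _ (by simp [sq]), derivative_map, eval_map, eval_map]
  congr 1
  ext <;> simp [mul_comm]

theorem IsUnit.existsUnique_add_mul_eq_zero {R : Type*} [CommRing R] {e : R} (he : IsUnit e)
    (c : R) :
    ∃! θ, c + e * θ = 0 := by
  obtain ⟨u, rfl⟩ := he
  refine ⟨-(↑u⁻¹ * c), by simp [← mul_assoc], fun θ hθ => ?_⟩
  linear_combination ↑u⁻¹ * hθ - θ * u.inv_mul

theorem Polynomial.Monic.dvd_of_aeval_eq_zero_of_degree_le {A B : Type*} [CommRing A] [Ring B]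
    [Algebra A B] {b : B} {P Q : A[X]} (hmonic : P.Monic) (hroot : aeval b P = 0)
    (hmin : ∀ Q : A[X], Q ≠ 0 → aeval b Q = 0 → P.degree ≤ Q.degree) (hQ : aeval b Q = 0) :
    P ∣ Q := by
  nontriviality A
  rw [← modByMonic_eq_zero_iff_dvd hmonic]
  by_contra hne
  refine (degree_modByMonic_lt Q hmonic).not_ge (hmin _ hne ?_)
  rwa [aeval_modByMonic_eq_self_of_root hroot]

namespace IsAdjoinRoot

section AdjoinSingleton

variable {A B : Type*} [CommRing A] [Ring B] [Algebra A B] {b : B} {P : A[X]}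
  (hroot : aeval b P = 0) (hdvd : ∀ Q : A[X], aeval b Q = 0 → P ∣ Q)

noncomputable def mkAdjoinSingleton : IsAdjoinRoot (Algebra.adjoin A {b}) P where
  map := aeval ⟨b, Algebra.self_mem_adjoin_singleton A b⟩
  map_surjective x := by
    have hx : (x : B) ∈ (aeval (R := A) b).range := by
      rw [← Algebra.adjoin_singleton_eq_range_aeval]
      exact x.2
    obtain ⟨Q, hQ⟩ := hx
    exact ⟨Q, Subtype.ext ((aeval_subalgebra_coe _ _ _).trans hQ)⟩
  ker_map := by
    ext Q
    rw [RingHom.mem_ker, Ideal.mem_span_singleton, ← Subtype.coe_inj, aeval_subalgebra_coe,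
      ZeroMemClass.coe_zero]
    exact ⟨hdvd Q, fun ⟨R, hR⟩ => by simp [hR, hroot]⟩

theorem mkAdjoinSingleton_root :
    (mkAdjoinSingleton hroot hdvd).root = ⟨b, Algebra.self_mem_adjoin_singleton A b⟩ :=
  aeval_X _

end AdjoinSingleton

variable {A R M : Type*} [CommRing A] [CommRing R] [Algebra A R] [CommRing M] {P : A[X]}
  (h : IsAdjoinRoot R P)

theorem ringHom_ext {φ ψ : R →+* M} (halg : φ.comp (algebraMap A R) = ψ.comp (algebraMap A R))
    (hroot : φ h.root = ψ h.root) : φ = ψ := by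
  ext x
  rw [← h.map_repr x, ← h.aeval_root_eq_map, aeval_def, hom_eval₂, hom_eval₂, halg, hroot]

variable {ρ : R →+* M} {δ : A → M} (hδ : IsDerivationVia (ρ.comp (algebraMap A R)) δ)
include hδ

theorem eval₂_toRingHom_inl_root_add_inr (θ : M) :
    P.eval₂ hδ.toRingHom (inl (ρ h.root) + inr θ) =
      inr ((P.eval₂ hδ.toRingHom (inl (ρ h.root))).snd + ρ (aeval h.root (derivative P)) * θ) := by
  have hfst : ∀ Q : A[X], (Q.eval₂ hδ.toRingHom (inl (ρ h.root))).fst = ρ (aeval h.root Q) := by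
    intro Q
    have hcomp : (fstHom M M M : TrivSqZeroExt M M →+* M).comp hδ.toRingHom =
        ρ.comp (algebraMap A R) := by ext; simp
    rw [aeval_def, hom_eval₂, ← fstHom_apply M, ← RingHom.coe_coe, hom_eval₂, hcomp]
    simp
  rw [eval₂_add_inr, hfst]
  ext <;> simp [hfst]

theorem existsUnique_isDerivationVia (hunit : IsUnit (ρ (aeval h.root (derivative P)))) :
    ∃! d : R → M, IsDerivationVia ρ d ∧ ∀ a, d (algebraMap A R a) = δ a := by
  obtain ⟨θ, hθ, hθ_unique⟩ :=
    hunit.existsUnique_add_mul_eq_zero (P.eval₂ hδ.toRingHom (inl (ρ h.root))).snd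
  have hlift : P.eval₂ hδ.toRingHom (inl (ρ h.root) + inr θ) = 0 := by
    rw [h.eval₂_toRingHom_inl_root_add_inr hδ, hθ, inr_zero]
  set ψ := h.lift hδ.toRingHom _ hlift
  have hψ_fst : (fstHom M M M : TrivSqZeroExt M M →+* M).comp ψ = ρ :=
    h.ringHom_ext (by ext; simp [ψ]) (by simp [ψ])
  refine ⟨fun x => (ψ x).snd,
    ⟨.of_ringHom ψ fun x => congrArg (· x) hψ_fst, fun a => by simp [ψ]⟩, ?_⟩
  rintro d ⟨hd, hext⟩
  have halg : hd.toRingHom.comp (algebraMap A R) = hδ.toRingHom := by ext <;> simp [hext]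
  have hroot : hd.toRingHom h.root = inl (ρ h.root) + inr (d h.root) := by ext <;> simp
  have hd_root : d h.root = θ := by
    refine hθ_unique _ (inr_injective (R := M) ?_)
    rw [← h.eval₂_toRingHom_inl_root_add_inr hδ, ← hroot, ← halg, ← hom_eval₂, ← aeval_def,
      h.aeval_root_self, map_zero, inr_zero]
  have : hd.toRingHom = ψ :=
    h.eq_lift _ _ (fun a => congrArg (· a) halg) (by rw [hroot, hd_root])
  funext x
  simpa using congrArg (fun φ => (φ x).snd) this

end IsAdjoinRoot

theorem derivation_extends_to_monogenic_general
    {A B : Type*} [CommRing A] [CommRing B]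
    [Algebra A B]
    (b : B) (P : Polynomial A) (hmonic : P.Monic)
    (hroot : Polynomial.aeval b P = 0)
    (hmin : ∀ Q : Polynomial A, Q ≠ 0 → Polynomial.aeval b Q = 0 → P.degree ≤ Q.degree)
    (S : Type*) [CommRing S] [Algebra B S] [Algebra A S] [IsScalarTower A B S]
    (d : A → S) (hd : IsDerivationVia (algebraMap A S) d) :
    ∃! d' : Algebra.adjoin A {b} →
        Localization.Away (algebraMap B S (Polynomial.aeval b (Polynomial.derivative P))),
      IsDerivationVia
        ((algebraMap S (Localization.Away
            (algebraMap B S (Polynomial.aeval b (Polynomial.derivative P))))).comp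
          ((algebraMap B S).comp ((Algebra.adjoin A {b}).val.toRingHom))) d' ∧
      ∀ a : A, d' (algebraMap A (Algebra.adjoin A {b}) a)
        = algebraMap S (Localization.Away
            (algebraMap B S (Polynomial.aeval b (Polynomial.derivative P)))) (d a) := by
  set f := aeval b (derivative P)
  set ι := algebraMap S (Localization.Away (algebraMap B S f))
  set ρ := ι.comp ((algebraMap B S).comp (Algebra.adjoin A {b}).val.toRingHom)
  let h := IsAdjoinRoot.mkAdjoinSingleton hroot
    fun _ hQ => hmonic.dvd_of_aeval_eq_zero_of_degree_le hroot hmin hQ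
  have hρ : ρ.comp (algebraMap A (Algebra.adjoin A {b})) = ι.comp (algebraMap A S) := by
    ext a
    simp [ρ, IsScalarTower.algebraMap_apply A B S]
  have hunit : IsUnit (ρ (aeval h.root (derivative P))) := by
    rw [IsAdjoinRoot.mkAdjoinSingleton_root]
    simpa [ρ, aeval_subalgebra_coe] using IsLocalization.Away.algebraMap_isUnit (algebraMap B S f)
  exact h.existsUnique_isDerivationVia (hρ ▸ hd.map ι) hunit

/-- Extension of derivations to monogenic integral extensions (Fact A.2 of "Commutative
bidifferential algebra"): if `P` is a monic polynomial over `A` of minimal degree among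
nonzero polynomials vanishing at `b`, then any derivation `d : A → S` extends uniquely
to a derivation `A[b] → S_f`, where `f = P'(b)` and `S_f` is the localization of `S`
away from (the image of) `f`. -/
theorem derivation_extends_to_monogenic
    {A B : Type*} [CommRing A] [IsDomain A] [CommRing B] [IsDomain B]
    [Algebra A B] (hinj : Function.Injective (algebraMap A B))
    (b : B) (P : Polynomial A) (hmonic : P.Monic)
    (hroot : Polynomial.aeval b P = 0)
    (hmin : ∀ Q : Polynomial A, Q ≠ 0 → Polynomial.aeval b Q = 0 → P.degree ≤ Q.degree)
    (S : Type*) [CommRing S] [Algebra B S] [Algebra A S] [IsScalarTower A B S]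
    (d : A → S) (hd : IsDerivationVia (algebraMap A S) d) :
    ∃! d' : Algebra.adjoin A {b} →
        Localization.Away (algebraMap B S (Polynomial.aeval b (Polynomial.derivative P))),
      IsDerivationVia
        ((algebraMap S (Localization.Away
            (algebraMap B S (Polynomial.aeval b (Polynomial.derivative P))))).comp
          ((algebraMap B S).comp ((Algebra.adjoin A {b}).val.toRingHom))) d' ∧
      ∀ a : A, d' (algebraMap A (Algebra.adjoin A {b}) a)
        = algebraMap S (Localization.Away
            (algebraMap B S (Polynomial.aeval b (Polynomial.derivative P)))) (d a) :=
  derivation_extends_to_monogenic_general b P hmonic hroot hmin S d hd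
end
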